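/- arXiv:2003.06540 — 6 statements merged into one kernel-verified Lean document; each statement's English description precedes it below -/
import Mathlib

section
/- The maps of Q form a complex: the matrix products q1 * q2 (1x6) and q2 * q3 (5x2) are zero matrices; equivalently, the composites of the associated linear maps R^2 -> R^6 -> R^5 -> R are zero. -/
/-- The data of the complex `Q`: seventeen elements of a commutative ring. -/
structure QData (R : Type*) where
  (a11 a12 a13 a21 a22 a23 l11 l12 l13 l21 l22 l23 p12 p13 p23 z1 z2 : R)

namespace QData

variable {R : Type*} [CommRing R] (d : QData R)

def E : R := d.p23*d.a11 - d.p13*d.a12 + d.p12*d.a13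

def F : R := d.p23*d.a21 - d.p13*d.a22 + d.p12*d.a23

def dd : R := (d.a11*d.l21 - d.a21*d.l11) + (d.a12*d.l22 - d.a22*d.l12) + (d.a13*d.l23 - d.a23*d.l13)

def gen1 : R := -(d.p23*(d.l12*d.l23 - d.l13*d.l22) + d.p13*(d.l11*d.l23 - d.l13*d.l21) + d.p12*(d.l11*d.l22 - d.l12*d.l21)) - d.z2*d.dd - d.z2*d.z1

def gen2 : R := d.E*d.l21 - d.F*d.l11 - d.z2*(d.a12*d.a23 - d.a13*d.a22) + d.z1*d.p23

def gen3 : R := d.E*d.l22 - d.F*d.l12 + d.z2*(d.a11*d.a23 - d.a13*d.a21) - d.z1*d.p13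

def gen4 : R := d.E*d.l23 - d.F*d.l13 - d.z2*(d.a11*d.a22 - d.a12*d.a21) + d.z1*d.p12

def gen5 : R := -((d.a11*d.l11 + d.a12*d.l12 + d.a13*d.l13)*(d.a21*d.l21 + d.a22*d.l22 + d.a23*d.l23) - (d.a11*d.l21 + d.a12*d.l22 + d.a13*d.l23)*(d.a21*d.l11 + d.a22*d.l12 + d.a23*d.l13)) - d.z1*d.dd - d.z1^2

/-- The first differential of `Q` (a `1 × 5` matrix). -/
def q1 : Matrix (Fin 1) (Fin 5) R :=
  !![d.gen1, d.gen2, d.gen3, d.gen4, d.gen5]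

/-- The second differential of `Q` (a `5 × 6` matrix). -/
def q2 : Matrix (Fin 5) (Fin 6) R :=
  !![d.p12*d.a23 - d.p13*d.a22 + d.p23*d.a21, -d.p12*d.a13 + d.p13*d.a12 - d.p23*d.a11, d.z1, d.a12*d.a23 - d.a13*d.a22, -(d.a11*d.a23 - d.a13*d.a21), d.a11*d.a22 - d.a12*d.a21;
     -d.l22*d.p12 - d.l23*d.p13 + d.z2*d.a21, d.p12*d.l12 + d.p13*d.l13 - d.z2*d.a11, d.l12*d.l23 - d.l13*d.l22, -(d.a12*d.l22 - d.a22*d.l12) - (d.a13*d.l23 - d.a23*d.l13) - d.z1, d.a11*d.l22 - d.a21*d.l12, d.a11*d.l23 - d.a21*d.l13;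
     d.l21*d.p12 - d.l23*d.p23 + d.z2*d.a22, -d.p12*d.l11 + d.p23*d.l13 - d.z2*d.a12, -(d.l11*d.l23 - d.l13*d.l21), d.a12*d.l21 - d.a22*d.l11, -(d.a11*d.l21 - d.a21*d.l11) - (d.a13*d.l23 - d.a23*d.l13) - d.z1, d.a12*d.l23 - d.a22*d.l13;
     d.l21*d.p13 + d.l22*d.p23 + d.z2*d.a23, -d.p13*d.l11 - d.p23*d.l12 - d.z2*d.a13, d.l11*d.l22 - d.l12*d.l21, d.a13*d.l21 - d.a23*d.l11, d.a13*d.l22 - d.a23*d.l12, -(d.a11*d.l21 - d.a21*d.l11) - (d.a12*d.l22 - d.a22*d.l12) - d.z1;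
     0, 0, -d.z2, -d.p23, d.p13, -d.p12]

/-- The third differential of `Q` (a `6 × 2` matrix). -/
def q3 : Matrix (Fin 6) (Fin 2) R :=
  !![d.a11*d.l11 + d.a12*d.l12 + d.a13*d.l13, d.a11*d.l21 + d.a12*d.l22 + d.a13*d.l23 + d.z1;
     d.a21*d.l11 + d.a22*d.l12 + d.a23*d.l13 - d.z1, d.a21*d.l21 + d.a22*d.l22 + d.a23*d.l23;
     -d.a11*d.p23 + d.a12*d.p13 - d.a13*d.p12, -d.a21*d.p23 + d.a22*d.p13 - d.a23*d.p12;
     -d.l12*d.p12 - d.l13*d.p13 + d.z2*d.a11, -d.l22*d.p12 - d.l23*d.p13 + d.z2*d.a21;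
     d.l11*d.p12 - d.l13*d.p23 + d.z2*d.a12, d.l21*d.p12 - d.l23*d.p23 + d.z2*d.a22;
     d.l11*d.p13 + d.l12*d.p23 + d.z2*d.a13, d.l21*d.p13 + d.l22*d.p23 + d.z2*d.a23]

end QData
lemma vec6_five {α : Type*} (a b c e f g : α) : ![a,b,c,e,f,g] 5 = g := rfl
lemma vec6_four {α : Type*} (a b c e f g : α) : ![a,b,c,e,f,g] 4 = f := rfl
lemma vec6_three {α : Type*} (a b c e f g : α) : ![a,b,c,e,f,g] 3 = e := rfl
lemma vec6_two {α : Type*} (a b c e f g : α) : ![a,b,c,e,f,g] 2 = c := rfl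
lemma vec5_four {α : Type*} (a b c e f : α) : ![a,b,c,e,f] 4 = f := rfl
lemma vec5_three {α : Type*} (a b c e f : α) : ![a,b,c,e,f] 3 = e := rfl
lemma vec5_two {α : Type*} (a b c e f : α) : ![a,b,c,e,f] 2 = c := rfl
lemma vec2_one {α : Type*} (a b : α) : ![a,b] 1 = b := rfl

set_option maxHeartbeats 4000000 in
/-- The maps of the complex `Q` compose to zero: `q1 * q2 = 0` and `q2 * q3 = 0`. -/
theorem Q_is_complex {R : Type*} [CommRing R] (d : QData R) :
    d.q1 * d.q2 = 0 ∧ d.q2 * d.q3 = 0 := by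
  constructor <;>
  · ext i j
    fin_cases i <;> fin_cases j <;>
      simp [QData.q1, QData.q2, QData.q3, QData.gen1, QData.gen2, QData.gen3, QData.gen4, QData.gen5, QData.E, QData.F, QData.dd, Matrix.mul_apply, Fin.sum_univ_succ, Matrix.cons_val_zero, Matrix.cons_val_one, Matrix.head_cons, Matrix.cons_val_succ, vec6_five, vec6_four, vec6_three, vec6_two, vec5_four, vec5_three, vec5_two, vec2_one] <;> ring
end

section
/- Assume R is Noetherian. If the ideal (gen1, gen2, gen3, gen4, gen5) of R contains an R-regular sequence of length 3 (i.e., has grade at least 3), then the complex Q is acyclic: the linear map given by q3 is injective, the kernel of the linear map given by q2 equals the image of the linear map given by q3, and the kernel of the linear map given by q1 equals the image of the linear map given by q2. -/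
open LinearMap RingTheory.Sequence Pointwise

section

variable {R M : Type*} [CommRing R] [AddCommGroup M] [Module R M]

lemma QuotSMulTop.mk_eq_zero_iff {x : R} {m : M} :
    (Submodule.Quotient.mk m : QuotSMulTop x M) = 0 ↔ ∃ c, m = x • c := by
  rw [Submodule.Quotient.mk_eq_zero, Submodule.mem_smul_pointwise_iff_exists]
  simp [eq_comm]

namespace RingTheory.Sequence.IsWeaklyRegular

lemma of_flat_module [Module.Flat R M] {rs : List R} (h : IsWeaklyRegular R rs) :
    IsWeaklyRegular M rs :=
  (TensorProduct.lid R M).isWeaklyRegular_congr rs |>.mp h.isWeaklyRegular_rTensor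

lemma exists_eq_smul_of_smul_eq_smul {x y : R} (h : IsWeaklyRegular M [x, y]) {a b : M}
    (hab : y • a = x • b) : ∃ c, a = x • c := by
  have hy : IsSMulRegular (QuotSMulTop x M) y :=
    (isWeaklyRegular_singleton_iff _ y).mp ((isWeaklyRegular_cons_iff M x [y]).mp h).2
  refine QuotSMulTop.mk_eq_zero_iff.mp (hy ?_)
  change y • _ = y • 0
  rw [smul_zero, ← Submodule.Quotient.mk_smul, QuotSMulTop.mk_eq_zero_iff]
  exact ⟨b, hab⟩

lemma exists_eq_smul_add_smul_of_smul_eq {x y z : R} (h : IsWeaklyRegular M [x, y, z])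
    {w a b : M} (hw : z • w = x • a + y • b) :
    ∃ c e, w = x • c + y • e := by
  have hyz : IsWeaklyRegular (QuotSMulTop x M) [y, z] :=
    ((isWeaklyRegular_cons_iff M x _).mp h).2
  obtain ⟨q, hq⟩ := hyz.exists_eq_smul_of_smul_eq_smul (a := Submodule.Quotient.mk w)
    (b := Submodule.Quotient.mk b) <| by
      rw [← Submodule.Quotient.mk_smul, ← Submodule.Quotient.mk_smul, hw,
        Submodule.Quotient.mk_add, QuotSMulTop.mk_eq_zero_iff.mpr ⟨a, rfl⟩, zero_add]
  obtain ⟨e, rfl⟩ := Submodule.Quotient.mk_surjective _ q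
  obtain ⟨c, hc⟩ := QuotSMulTop.mk_eq_zero_iff.mp <| show
      (Submodule.Quotient.mk (w - y • e) : QuotSMulTop x M) = 0 by
    rw [Submodule.Quotient.mk_sub, hq, Submodule.Quotient.mk_smul, sub_self]
  exact ⟨c, e, by rw [← hc, sub_add_cancel]⟩

end RingTheory.Sequence.IsWeaklyRegular

end

namespace LinearMap

variable {R M₀ M₁ M₂ M₃ : Type*} [CommRing R] [AddCommGroup M₀] [Module R M₀]
  [AddCommGroup M₁] [Module R M₁] [AddCommGroup M₂] [Module R M₂]
  [AddCommGroup M₃] [Module R M₃]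

lemma mem_colon_range_ker_of_homotopy {f : M₂ →ₗ[R] M₁} {g : M₁ →ₗ[R] M₀} {r : R}
    (s : M₁ →ₗ[R] M₂) (t : M₀ →ₗ[R] M₁) (h : f ∘ₗ s + t ∘ₗ g = r • id) :
    r ∈ (range f).colon (ker g) := by
  refine Submodule.mem_colon.mpr fun v hv => ⟨s v, ?_⟩
  simpa [mem_ker.mp hv] using DFunLike.congr_fun h v

lemma mem_colon_bot_ker_of_homotopy {g : M₁ →ₗ[R] M₀} {r : R} (t : M₀ →ₗ[R] M₁)
    (h : t ∘ₗ g = r • id) : r ∈ (⊥ : Submodule R M₁).colon (ker g) := by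
  refine Submodule.mem_colon.mpr fun v hv => ?_
  simpa [mem_ker.mp hv, eq_comm] using DFunLike.congr_fun h v

lemma injective_of_mem_colon_bot_ker {f : M₁ →ₗ[R] M₀} {x : R} (hx : IsSMulRegular M₁ x)
    (hmem : x ∈ (⊥ : Submodule R M₁).colon (ker f)) : Function.Injective f :=
  ker_eq_bot.mp <| eq_bot_iff.mpr fun v hv =>
    (Submodule.mem_bot R).mpr (hx.right_eq_zero_of_smul (Submodule.mem_colon.mp hmem v hv))

lemma mem_range_of_smul_eq_of_smul_eq_smul {f : M₂ →ₗ[R] M₁} {x y : R}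
    (hM₂ : IsWeaklyRegular M₂ [x, y]) (hM₁ : IsSMulRegular M₁ x) {v : M₁} {a b : M₂}
    (hv : x • v = f a) (hab : y • a = x • b) : v ∈ range f := by
  obtain ⟨c, rfl⟩ := hM₂.exists_eq_smul_of_smul_eq_smul hab
  exact ⟨c, hM₁ (by simp [hv])⟩

lemma ker_eq_range_of_isWeaklyRegular_pair_mem_colon {f : M₂ →ₗ[R] M₁}
    {g : M₁ →ₗ[R] M₀} {x y : R} (hgf : g ∘ₗ f = 0) (hf : Function.Injective f)
    (hM₂ : IsWeaklyRegular M₂ [x, y]) (hM₁ : IsSMulRegular M₁ x)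
    (hx : x ∈ (range f).colon (ker g)) (hy : y ∈ (range f).colon (ker g)) :
    ker g = range f := by
  refine le_antisymm (fun v hv => ?_) (range_le_ker_iff.mpr hgf)
  obtain ⟨a, ha⟩ := Submodule.mem_colon.mp hx v hv
  obtain ⟨b, hb⟩ := Submodule.mem_colon.mp hy v hv
  refine mem_range_of_smul_eq_of_smul_eq_smul (b := b) hM₂ hM₁ ha.symm (hf ?_)
  rw [map_smul, map_smul, ha, hb, smul_comm]

lemma ker_eq_range_of_isWeaklyRegular_triple_mem_colon {f : M₃ →ₗ[R] M₂}
    {g : M₂ →ₗ[R] M₁} {h : M₁ →ₗ[R] M₀} {x y z : R} (hf : Function.Injective f)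
    (hgf : ker g = range f)
    (hhg : h ∘ₗ g = 0) (hM₃ : IsWeaklyRegular M₃ [x, y, z])
    (hM₂ : IsWeaklyRegular M₂ [x, y]) (hM₁ : IsSMulRegular M₁ x)
    (hx : x ∈ (range g).colon (ker h)) (hy : y ∈ (range g).colon (ker h))
    (hz : z ∈ (range g).colon (ker h)) : ker h = range g := by
  refine le_antisymm (fun w hw => ?_) (range_le_ker_iff.mpr hhg)
  obtain ⟨a, ha⟩ := Submodule.mem_colon.mp hx w hw
  obtain ⟨b, hb⟩ := Submodule.mem_colon.mp hy w hw
  obtain ⟨c, hc⟩ := Submodule.mem_colon.mp hz w hw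
  have lift : ∀ {u : M₂}, g u = 0 → ∃ W, f W = u := fun hu =>
    (hgf ▸ mem_ker.mpr hu : _ ∈ range f)
  obtain ⟨W₁, hW₁⟩ := lift (u := y • a - x • b) (by simp [ha, hb, smul_comm y x])
  obtain ⟨W₂, hW₂⟩ := lift (u := z • a - x • c) (by simp [ha, hc, smul_comm z x])
  obtain ⟨W₃, hW₃⟩ := lift (u := z • b - y • c) (by simp [hb, hc, smul_comm z y])
  have koszul : z • W₁ = x • (-W₃) + y • W₂ := by
    refine hf ?_
    simp only [map_add, map_smul, map_neg, hW₁, hW₂, hW₃]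
    module
  obtain ⟨s, t, hst⟩ := hM₃.exists_eq_smul_add_smul_of_smul_eq koszul
  refine mem_range_of_smul_eq_of_smul_eq_smul (a := a - f t) (b := b + f s) hM₂ hM₁ ?_ ?_
  · have hgft : g (f t) = 0 := hgf.ge ⟨t, rfl⟩
    rw [map_sub, hgft, sub_zero, ha]
  · have := congrArg f hst
    rw [hW₁, map_add, map_smul, map_smul] at this
    linear_combination (norm := module) this

end LinearMap

namespace QData

variable {R : Type*} [CommRing R] (d : QData R)

def genIdeal : Ideal R := Ideal.span {d.gen1, d.gen2, d.gen3, d.gen4, d.gen5}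

/-- The last homotopy is minus the adjugate of the top `2 × 2` block of `q3`, whose determinant
is `-gen5`. -/
def homotopy₂ : Fin 5 → Matrix (Fin 2) (Fin 6) R :=
  ![!![0, d.z2, 0, -d.l21, -d.l22, -d.l23;
       -d.z2, 0, 0, d.l11, d.l12, d.l13],
    !![0, -d.p23, -d.l21, 0, -d.a23, d.a22;
       d.p23, 0, d.l11, 0, d.a13, -d.a12],
    !![0, d.p13, -d.l22, d.a23, 0, -d.a21;
       -d.p13, 0, d.l12, -d.a13, 0, d.a11],
    !![0, -d.p12, -d.l23, -d.a22, d.a21, 0;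
       d.p12, 0, d.l13, d.a12, -d.a11, 0],
    !![-(d.a21*d.l21 + d.a22*d.l22 + d.a23*d.l23), d.a11*d.l21 + d.a12*d.l22 + d.a13*d.l23 + d.z1,
         0, 0, 0, 0;
       d.a21*d.l11 + d.a22*d.l12 + d.a23*d.l13 - d.z1, -(d.a11*d.l11 + d.a12*d.l12 + d.a13*d.l13),
         0, 0, 0, 0]]

def homotopy₁ : Fin 5 → Matrix (Fin 6) (Fin 5) R :=
  ![!![0, d.l11, d.l12, d.l13, 0;
       0, d.l21, d.l22, d.l23, 0;
       0, -d.p23, d.p13, -d.p12, d.z1 + d.dd;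
       0, d.z2, 0, 0, d.l12*d.l23 - d.l13*d.l22;
       0, 0, d.z2, 0, d.l13*d.l21 - d.l11*d.l23;
       0, 0, 0, d.z2, d.l11*d.l22 - d.l12*d.l21],
    !![-d.l11, 0, d.a13, -d.a12, 0;
       -d.l21, 0, d.a23, -d.a22, 0;
       d.p23, 0, 0, 0, d.a12*d.a23 - d.a13*d.a22;
       -d.z2, 0, -d.p13, d.p12, -d.z1 - (d.a11*d.l21 - d.a21*d.l11);
       0, 0, -d.p23, 0, d.a22*d.l11 - d.a12*d.l21;
       0, 0, 0, -d.p23, d.a23*d.l11 - d.a13*d.l21],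
    !![-d.l12, -d.a13, 0, d.a11, 0;
       -d.l22, -d.a23, 0, d.a21, 0;
       -d.p13, 0, 0, 0, d.a13*d.a21 - d.a11*d.a23;
       0, d.p13, 0, 0, d.a21*d.l12 - d.a11*d.l22;
       -d.z2, d.p23, 0, d.p12, -d.z1 - (d.a12*d.l22 - d.a22*d.l12);
       0, 0, 0, d.p13, d.a23*d.l12 - d.a13*d.l22],
    !![-d.l13, d.a12, -d.a11, 0, 0;
       -d.l23, d.a22, -d.a21, 0, 0;
       d.p12, 0, 0, 0, d.a11*d.a22 - d.a12*d.a21;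
       0, -d.p12, 0, 0, d.a21*d.l13 - d.a11*d.l23;
       0, 0, -d.p12, 0, d.a22*d.l13 - d.a12*d.l23;
       -d.z2, d.p23, -d.p13, 0, -d.z1 - (d.a13*d.l23 - d.a23*d.l13)],
    !![0, 0, 0, 0, 0;
       0, 0, 0, 0, 0;
       -d.z1 - d.dd, d.a13*d.a22 - d.a12*d.a23, d.a11*d.a23 - d.a13*d.a21,
         d.a12*d.a21 - d.a11*d.a22, 0;
       d.l13*d.l22 - d.l12*d.l23, d.z1 + d.a11*d.l21 - d.a21*d.l11, d.a11*d.l22 - d.a21*d.l12,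
         d.a11*d.l23 - d.a21*d.l13, 0;
       d.l11*d.l23 - d.l13*d.l21, d.a12*d.l21 - d.a22*d.l11, d.z1 + d.a12*d.l22 - d.a22*d.l12,
         d.a12*d.l23 - d.a22*d.l13, 0;
       d.l12*d.l21 - d.l11*d.l22, d.a13*d.l21 - d.a23*d.l11, d.a13*d.l22 - d.a23*d.l12,
         d.z1 + d.a13*d.l23 - d.a23*d.l13, 0]]

lemma q2_comp_q3 : d.q2.mulVecLin ∘ₗ d.q3.mulVecLin = 0 := by
  refine LinearMap.ext fun v => ?_
  simp [q2, q3, funext_iff, Fin.forall_fin_succ, Matrix.vecHead, Matrix.vecTail]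
  refine ⟨?_, ?_, ?_, ?_, ?_⟩ <;> ring

lemma q1_comp_q2 : d.q1.mulVecLin ∘ₗ d.q2.mulVecLin = 0 := by
  refine LinearMap.ext fun v => ?_
  simp [q1, q2, gen1, gen2, gen3, gen4, gen5, E, F, dd, funext_iff, Matrix.vecHead,
    Matrix.vecTail]
  ring

lemma homotopy₂_comp_q3 (i : Fin 5) :
    (d.homotopy₂ i).mulVecLin ∘ₗ d.q3.mulVecLin = d.q1 0 i • LinearMap.id := by
  refine LinearMap.ext fun v => ?_
  fin_cases i <;>
    simp [homotopy₂, q1, q3, gen1, gen2, gen3, gen4, gen5, E, F, dd, funext_iff,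
      Fin.forall_fin_succ, Matrix.vecHead, Matrix.vecTail] <;>
    refine ⟨?_, ?_⟩ <;> ring

lemma q3_comp_homotopy₂_add_homotopy₁_comp_q2 (i : Fin 5) :
    d.q3.mulVecLin ∘ₗ (d.homotopy₂ i).mulVecLin +
        (d.homotopy₁ i).mulVecLin ∘ₗ d.q2.mulVecLin = d.q1 0 i • LinearMap.id := by
  refine LinearMap.ext fun v => ?_
  fin_cases i <;>
    simp [homotopy₂, homotopy₁, q1, q2, q3, gen1, gen2, gen3, gen4, gen5, E, F, dd, funext_iff,
      Fin.forall_fin_succ, Matrix.vecHead, Matrix.vecTail] <;>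
    refine ⟨?_, ?_, ?_, ?_, ?_, ?_⟩ <;> ring

lemma q2_comp_homotopy₁_add_single_comp_q1 (i : Fin 5) :
    d.q2.mulVecLin ∘ₗ (d.homotopy₁ i).mulVecLin +
        (Matrix.single i 0 1).mulVecLin ∘ₗ d.q1.mulVecLin = d.q1 0 i • LinearMap.id := by
  refine LinearMap.ext fun v => ?_
  fin_cases i <;>
    simp [homotopy₁, q1, q2, gen1, gen2, gen3, gen4, gen5, E, F, dd, funext_iff,
      Fin.forall_fin_succ, Matrix.vecHead, Matrix.vecTail, Matrix.single_mulVec,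
      Function.update_apply] <;>
    refine ⟨?_, ?_, ?_, ?_, ?_⟩ <;> ring

lemma genIdeal_le {J : Ideal R} (h : ∀ i, d.q1 0 i ∈ J) : d.genIdeal ≤ J := by
  simpa only [genIdeal, Ideal.span_le, Set.insert_subset_iff, Set.singleton_subset_iff]
    using ⟨h 0, h 1, h 2, h 3, h 4⟩

lemma genIdeal_le_colon_bot_ker_q3 :
    d.genIdeal ≤ (⊥ : Submodule R (Fin 2 → R)).colon (ker d.q3.mulVecLin) :=
  d.genIdeal_le fun i => mem_colon_bot_ker_of_homotopy _ (d.homotopy₂_comp_q3 i)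

lemma genIdeal_le_colon_range_q3_ker_q2 :
    d.genIdeal ≤ (range d.q3.mulVecLin).colon (ker d.q2.mulVecLin) :=
  d.genIdeal_le fun i =>
    mem_colon_range_ker_of_homotopy _ _ (d.q3_comp_homotopy₂_add_homotopy₁_comp_q2 i)

lemma genIdeal_le_colon_range_q2_ker_q1 :
    d.genIdeal ≤ (range d.q2.mulVecLin).colon (ker d.q1.mulVecLin) :=
  d.genIdeal_le fun i =>
    mem_colon_range_ker_of_homotopy _ _ (d.q2_comp_homotopy₁_add_single_comp_q1 i)

end QData

theorem Q_acyclic_general {R : Type*} [CommRing R] (d : QData R)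
    (hgrade : ∃ rs : List R, rs.length = 3 ∧
      (∀ x ∈ rs, x ∈ Ideal.span {d.gen1, d.gen2, d.gen3, d.gen4, d.gen5}) ∧
      RingTheory.Sequence.IsRegular R rs) :
    Function.Injective d.q3.mulVecLin ∧
    LinearMap.ker d.q2.mulVecLin = LinearMap.range d.q3.mulVecLin ∧
    LinearMap.ker d.q1.mulVecLin = LinearMap.range d.q2.mulVecLin := by
  obtain ⟨rs, hlen, hmem, hreg⟩ := hgrade
  obtain ⟨x, y, z, rfl⟩ := List.length_eq_three.mp hlen
  have mem {J : Ideal R} (hJ : d.genIdeal ≤ J) : x ∈ J ∧ y ∈ J ∧ z ∈ J :=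
    ⟨hJ (hmem x (by simp)), hJ (hmem y (by simp)), hJ (hmem z (by simp))⟩
  have reg₃ (n : ℕ) : IsWeaklyRegular (Fin n → R) [x, y, z] :=
    hreg.toIsWeaklyRegular.of_flat_module
  have reg₂ (n : ℕ) : IsWeaklyRegular (Fin n → R) [x, y] :=
    ((isWeaklyRegular_append_iff _ [x, y] [z]).mp (reg₃ n)).1
  have reg₁ (n : ℕ) : IsSMulRegular (Fin n → R) x :=
    ((isWeaklyRegular_cons_iff _ x [y]).mp (reg₂ n)).1
  obtain ⟨hx₃, -, -⟩ := mem d.genIdeal_le_colon_bot_ker_q3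
  obtain ⟨hx₂, hy₂, -⟩ := mem d.genIdeal_le_colon_range_q3_ker_q2
  obtain ⟨hx₁, hy₁, hz₁⟩ := mem d.genIdeal_le_colon_range_q2_ker_q1
  have inj := injective_of_mem_colon_bot_ker (reg₁ 2) hx₃
  have exact₂ := ker_eq_range_of_isWeaklyRegular_pair_mem_colon d.q2_comp_q3 inj (reg₂ 2)
    (reg₁ 6) hx₂ hy₂
  exact ⟨inj, exact₂, ker_eq_range_of_isWeaklyRegular_triple_mem_colon inj exact₂ d.q1_comp_q2
    (reg₃ 2) (reg₂ 6) (reg₁ 5) hx₁ hy₁ hz₁⟩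

/-- Theorem: if the ideal generated by the five entries of `q1` contains a regular
sequence of length three, then the complex `Q` is acyclic. -/
theorem Q_acyclic {R : Type*} [CommRing R] [IsNoetherianRing R] (d : QData R)
    (hgrade : ∃ rs : List R, rs.length = 3 ∧
      (∀ x ∈ rs, x ∈ Ideal.span {d.gen1, d.gen2, d.gen3, d.gen4, d.gen5}) ∧
      RingTheory.Sequence.IsRegular R rs) :
    Function.Injective d.q3.mulVecLin ∧
    LinearMap.ker d.q2.mulVecLin = LinearMap.range d.q3.mulVecLin ∧
    LinearMap.ker d.q1.mulVecLin = LinearMap.range d.q2.mulVecLin :=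
  Q_acyclic_general d hgrade
end

section
/- The maps of B form a complex: the matrix products b1 * b2 (1x6) and b2 * b3 (5x2) are zero matrices; equivalently, the composites of the associated linear maps R^2 -> R^6 -> R^5 -> R are zero. -/
/-- The data of Brown's complex `B`: eleven elements of a commutative ring. -/
structure BData (R : Type*) where
  (u11 u12 u13 u21 u22 u23 pi1 pi2 pi3 w1 z2 : R)

namespace BData

variable {R : Type*} [CommRing R] (d : BData R)

def UP1 : R := d.u11*d.pi1 + d.u12*d.pi2 + d.u13*d.pi3

def UP2 : R := d.u21*d.pi1 + d.u22*d.pi2 + d.u23*d.pi3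

def D1 : R := d.u12*d.u23 - d.u13*d.u22

def D2 : R := -(d.u11*d.u23 - d.u13*d.u21)

def D3 : R := d.u11*d.u22 - d.u12*d.u21

/-- The first differential of `B` (a `1 × 5` matrix). -/
def b1 : Matrix (Fin 1) (Fin 5) R :=
  !![d.UP1, d.UP2, d.z2*d.D1 - d.w1*d.pi1, d.z2*d.D2 - d.w1*d.pi2, d.z2*d.D3 - d.w1*d.pi3]

/-- The second differential of `B` (a `5 × 6` matrix). -/
def b2 : Matrix (Fin 5) (Fin 6) R :=
  !![d.UP2, 0, -d.w1, -d.z2*d.u21, -d.z2*d.u22, -d.z2*d.u23;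
     -d.UP1, d.w1, 0, d.z2*d.u11, d.z2*d.u12, d.z2*d.u13;
     0, d.u21, -d.u11, 0, -d.pi3, d.pi2;
     0, d.u22, -d.u12, d.pi3, 0, -d.pi1;
     0, d.u23, -d.u13, -d.pi2, d.pi1, 0]

/-- The third differential of `B` (a `6 × 2` matrix). -/
def b3 : Matrix (Fin 6) (Fin 2) R :=
  !![d.w1, d.z2;
     d.UP1, 0;
     d.UP2, 0;
     d.D1, d.pi1;
     d.D2, d.pi2;
     d.D3, d.pi3]

end BData
lemma cons_val_five {α : Type*} (x : α) (u : Fin 5 → α) :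
    Matrix.vecCons x u 5 = u 4 := rfl

/-- The maps of Brown's complex `B` compose to zero: `b1 * b2 = 0` and `b2 * b3 = 0`. -/
theorem B_is_complex {R : Type*} [CommRing R] (d : BData R) :
    d.b1 * d.b2 = 0 ∧ d.b2 * d.b3 = 0 := by
  constructor <;>
  · ext i j
    fin_cases i <;> fin_cases j <;>
      simp [BData.b1, BData.b2, BData.b3, BData.UP1, BData.UP2, BData.D1, BData.D2, BData.D3,
        Matrix.mul_apply, Fin.sum_univ_succ, Matrix.cons_val_succ, cons_val_five] <;> ring
end

section
/- Assume R is Noetherian. If the ideal of R generated by the five entries of b1 contains an R-regular sequence of length 3 (i.e., has grade at least 3), then the complex B is acyclic: the linear map given by b3 is injective, the kernel of the linear map given by b2 equals the image of the linear map given by b3, and the kernel of the linear map given by b1 equals the image of the linear map given by b2. -/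
/-!
Every entry `g` of `b1` acts null-homotopically on `B` in degrees `1, 2, 3`: explicit matrices
`h₃, h₂, h₁` satisfy `h₃ b3 = g`, `b3 h₃ + h₂ b2 = g` and `b2 h₂ + h₁ b1 = g`. Hence so does every
element of the ideal `I` of entries of `b1`, and exactness follows from a regular sequence
`x₁, x₂, x₃` in `I` by the usual descent, run modulo an ideal `J`. In degree 3, `h₃ b3 w = x w`, so
`b3 w ≡ 0` forces `w ≡ 0` when `x` is regular modulo `J`. In degree 2, if `b2 v ≡ 0 mod J` then
`x v ≡ b3 (h₃ v)`, so by degree 3 modulo `J + (x)`, for the next element of the sequence,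
`h₃ v ≡ x r mod J`; cancelling `x` gives `v ≡ b3 r`. Degree 1 is the degree-2 step modulo `(x₁)`.
-/

theorem RingTheory.Sequence.IsWeaklyRegular.isSMulRegular_triple {R M : Type*} [CommRing R]
    [AddCommGroup M] [Module R M] {x₁ x₂ x₃ : R}
    (h : RingTheory.Sequence.IsWeaklyRegular M [x₁, x₂, x₃]) :
    IsSMulRegular (M ⧸ (⊥ : Ideal R) • (⊤ : Submodule R M)) x₁ ∧
      IsSMulRegular (M ⧸ Ideal.span {x₁} • (⊤ : Submodule R M)) x₂ ∧
      IsSMulRegular (M ⧸ (Ideal.span {x₁} ⊔ Ideal.span {x₂}) • (⊤ : Submodule R M)) x₃ := by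
  have h₁ := h.regular_mod_prev 0 (by simp)
  have h₂ := h.regular_mod_prev 1 (by simp)
  have h₃ := h.regular_mod_prev 2 (by simp)
  rw [show Ideal.ofList ([x₁, x₂, x₃].take 0) = ⊥ by simp] at h₁
  rw [show Ideal.ofList ([x₁, x₂, x₃].take 1) = Ideal.span {x₁} by simp] at h₂
  rw [show Ideal.ofList ([x₁, x₂, x₃].take 2) = Ideal.span {x₁} ⊔ Ideal.span {x₂} by
    simp [Ideal.ofList_cons]] at h₃
  exact ⟨h₁, h₂, h₃⟩

theorem RingTheory.Sequence.IsWeaklyRegular.pi {R : Type*} [CommRing R] {rs : List R}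
    (h : RingTheory.Sequence.IsWeaklyRegular R rs) (ι : Type*) [Finite ι] :
    RingTheory.Sequence.IsWeaklyRegular (ι → R) rs :=
  ((TensorProduct.rid R (ι → R)).isWeaklyRegular_congr rs).1 h.isWeaklyRegular_lTensor


section

open Submodule

variable {R M₀ M₁ M₂ M₃ : Type*} [CommRing R]
  [AddCommGroup M₀] [Module R M₀] [AddCommGroup M₁] [Module R M₁]
  [AddCommGroup M₂] [Module R M₂] [AddCommGroup M₃] [Module R M₃]
  (f₁ : M₁ →ₗ[R] M₀) (f₂ : M₂ →ₗ[R] M₁) (f₃ : M₃ →ₗ[R] M₂)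

def nullHomotopicIdeal : Ideal R where
  carrier := {x | ∃ (h₁ : M₀ →ₗ[R] M₁) (h₂ : M₁ →ₗ[R] M₂) (h₃ : M₂ →ₗ[R] M₃),
    h₃ ∘ₗ f₃ = x • LinearMap.id ∧ f₃ ∘ₗ h₃ + h₂ ∘ₗ f₂ = x • LinearMap.id ∧
      f₂ ∘ₗ h₂ + h₁ ∘ₗ f₁ = x • LinearMap.id}
  zero_mem' := ⟨0, 0, 0, by simp⟩
  add_mem' := by
    rintro x y ⟨h₁, h₂, h₃, e₃, e₂, e₁⟩ ⟨k₁, k₂, k₃, e₃', e₂', e₁'⟩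
    refine ⟨h₁ + k₁, h₂ + k₂, h₃ + k₃, ?_, ?_, ?_⟩
    · rw [LinearMap.add_comp, e₃, e₃', add_smul]
    · rw [LinearMap.comp_add, LinearMap.add_comp, add_smul, ← e₂, ← e₂']
      abel
    · rw [LinearMap.comp_add, LinearMap.add_comp, add_smul, ← e₁, ← e₁']
      abel
  smul_mem' := by
    rintro c x ⟨h₁, h₂, h₃, e₃, e₂, e₁⟩
    refine ⟨c • h₁, c • h₂, c • h₃, ?_, ?_, ?_⟩
    · rw [LinearMap.smul_comp, e₃, smul_smul, smul_eq_mul]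
    · rw [LinearMap.comp_smul, LinearMap.smul_comp, ← smul_add, e₂, smul_smul, smul_eq_mul]
    · rw [LinearMap.comp_smul, LinearMap.smul_comp, ← smul_add, e₁, smul_smul, smul_eq_mul]

namespace nullHomotopicIdeal

variable {f₁ f₂ f₃} {J : Ideal R}

theorem mem_smul_top_of_map_mem_smul_top {x : R} (hx : x ∈ nullHomotopicIdeal f₁ f₂ f₃)
    (hreg : IsSMulRegular (M₃ ⧸ J • (⊤ : Submodule R M₃)) x) {w : M₃}
    (hw : f₃ w ∈ J • (⊤ : Submodule R M₂)) : w ∈ J • (⊤ : Submodule R M₃) := by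
  obtain ⟨-, -, h₃, e₃, -, -⟩ := hx
  refine mem_of_isSMulRegular_quotient_of_smul_mem hreg ?_
  have : h₃ (f₃ w) = x • w := LinearMap.congr_fun e₃ w
  rw [← this]
  exact smul_top_le_comap_smul_top J h₃ hw

theorem exists_sub_mem_smul_top_of_map_mem_smul_top {x x' : R}
    (hx : x ∈ nullHomotopicIdeal f₁ f₂ f₃) (hx' : x' ∈ nullHomotopicIdeal f₁ f₂ f₃)
    (hreg : IsSMulRegular (M₂ ⧸ J • (⊤ : Submodule R M₂)) x)
    (hreg' : IsSMulRegular (M₃ ⧸ (J ⊔ Ideal.span {x}) • (⊤ : Submodule R M₃)) x')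
    {v : M₂} (hv : f₂ v ∈ J • (⊤ : Submodule R M₁)) :
    ∃ u, v - f₃ u ∈ J • (⊤ : Submodule R M₂) := by
  obtain ⟨-, h₂, h₃, -, e₂, -⟩ := hx
  have hxv : x • v - f₃ (h₃ v) ∈ J • (⊤ : Submodule R M₂) := by
    have : h₂ (f₂ v) = x • v - f₃ (h₃ v) := eq_sub_of_add_eq' (LinearMap.congr_fun e₂ v)
    rw [← this]
    exact smul_top_le_comap_smul_top J h₂ hv
  have hh₃v : h₃ v ∈ (J ⊔ Ideal.span {x}) • (⊤ : Submodule R M₃) := by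
    refine mem_smul_top_of_map_mem_smul_top hx' hreg' ?_
    rw [sup_smul, ideal_span_singleton_smul, ← sub_sub_cancel (x • v) (f₃ (h₃ v))]
    exact sub_mem (mem_sup_right (smul_mem_pointwise_smul _ _ _ mem_top)) (mem_sup_left hxv)
  rw [sup_smul, ideal_span_singleton_smul, mem_sup] at hh₃v
  obtain ⟨y, hy, z, hz, hyz⟩ := hh₃v
  obtain ⟨r, -, rfl⟩ := (mem_smul_pointwise_iff_exists _ _ _).1 hz
  refine ⟨r, mem_of_isSMulRegular_quotient_of_smul_mem hreg ?_⟩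
  have : x • (v - f₃ r) = (x • v - f₃ (h₃ v)) + f₃ y := by
    rw [← hyz, map_add, map_smul, smul_sub]
    abel
  rw [this]
  exact add_mem hxv (smul_top_le_comap_smul_top J f₃ hy)

theorem mem_range_of_map_eq_zero (h₃₂ : f₂ ∘ₗ f₃ = 0) {x₁ x₂ x₃ : R}
    (hx₁ : x₁ ∈ nullHomotopicIdeal f₁ f₂ f₃) (hx₂ : x₂ ∈ nullHomotopicIdeal f₁ f₂ f₃)
    (hx₃ : x₃ ∈ nullHomotopicIdeal f₁ f₂ f₃)
    (hreg₁ : IsSMulRegular (M₁ ⧸ (⊥ : Ideal R) • (⊤ : Submodule R M₁)) x₁)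
    (hreg₂ : IsSMulRegular (M₂ ⧸ Ideal.span {x₁} • (⊤ : Submodule R M₂)) x₂)
    (hreg₃ :
      IsSMulRegular (M₃ ⧸ (Ideal.span {x₁} ⊔ Ideal.span {x₂}) • (⊤ : Submodule R M₃)) x₃)
    {v : M₁} (hv : f₁ v = 0) : v ∈ LinearMap.range f₂ := by
  obtain ⟨h₁, h₂, -, -, -, e₁⟩ := hx₁
  have hxv : f₂ (h₂ v) = x₁ • v := by simpa [hv] using LinearMap.congr_fun e₁ v
  have hx₁v : f₂ (h₂ v) ∈ Ideal.span {x₁} • (⊤ : Submodule R M₁) := by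
    rw [hxv, ideal_span_singleton_smul]
    exact smul_mem_pointwise_smul _ _ _ mem_top
  obtain ⟨u, hu⟩ := exists_sub_mem_smul_top_of_map_mem_smul_top hx₂ hx₃ hreg₂ hreg₃ hx₁v
  rw [ideal_span_singleton_smul] at hu
  obtain ⟨s, -, hs⟩ := (mem_smul_pointwise_iff_exists _ _ _).1 hu
  refine ⟨s, ?_⟩
  have : x₁ • (f₂ s - v) ∈ (⊥ : Ideal R) • (⊤ : Submodule R M₁) := by
    rw [bot_smul, mem_bot, smul_sub, ← map_smul, hs, map_sub, hxv, ← LinearMap.comp_apply, h₃₂]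
    simp
  simpa [sub_eq_zero] using mem_of_isSMulRegular_quotient_of_smul_mem hreg₁ this

theorem acyclic_of_isWeaklyRegular (h₃₂ : f₂ ∘ₗ f₃ = 0) (h₂₁ : f₁ ∘ₗ f₂ = 0) {x₁ x₂ x₃ : R}
    (hx : ∀ x ∈ [x₁, x₂, x₃], x ∈ nullHomotopicIdeal f₁ f₂ f₃)
    (hM₁ : RingTheory.Sequence.IsWeaklyRegular M₁ [x₁, x₂, x₃])
    (hM₂ : RingTheory.Sequence.IsWeaklyRegular M₂ [x₁, x₂, x₃])
    (hM₃ : RingTheory.Sequence.IsWeaklyRegular M₃ [x₁, x₂, x₃]) :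
    Function.Injective f₃ ∧ LinearMap.ker f₂ = LinearMap.range f₃ ∧
      LinearMap.ker f₁ = LinearMap.range f₂ := by
  obtain ⟨r₁₁, -, -⟩ := hM₁.isSMulRegular_triple
  obtain ⟨r₂₁, r₂₂, -⟩ := hM₂.isSMulRegular_triple
  obtain ⟨r₃₁, r₃₂, r₃₃⟩ := hM₃.isSMulRegular_triple
  have hx₁ := hx x₁ (by simp)
  have hx₂ := hx x₂ (by simp)
  have hx₃ := hx x₃ (by simp)
  refine ⟨(injective_iff_map_eq_zero f₃).2 fun w hw ↦ ?_, le_antisymm (fun v hv ↦ ?_)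
    (LinearMap.range_le_ker_iff.2 h₃₂), le_antisymm (fun v hv ↦ ?_)
    (LinearMap.range_le_ker_iff.2 h₂₁)⟩
  · simpa using mem_smul_top_of_map_mem_smul_top hx₁ r₃₁ (w := w) (by simp [hw])
  · obtain ⟨u, hu⟩ := exists_sub_mem_smul_top_of_map_mem_smul_top hx₁ hx₂ r₂₁
      (by rwa [bot_sup_eq]) (v := v) (by simpa using hv)
    rw [bot_smul, mem_bot, sub_eq_zero] at hu
    exact ⟨u, hu.symm⟩
  · exact mem_range_of_map_eq_zero h₃₂ hx₁ hx₂ hx₃ r₁₁ r₂₂ r₃₃ hv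

end nullHomotopicIdeal

end

namespace BData

open Matrix

variable {R : Type*} [CommRing R] (d : BData R)

def homotopy₃ : Fin 5 → Matrix (Fin 2) (Fin 6) R := ![
  !![0, 1, 0, 0, 0, 0;
     0, 0, 0, d.u11, d.u12, d.u13],
  !![0, 0, 1, 0, 0, 0;
     0, 0, 0, d.u21, d.u22, d.u23],
  !![-d.pi1, 0, 0, d.z2, 0, 0;
     d.D1, 0, 0, -d.w1, 0, 0],
  !![-d.pi2, 0, 0, 0, d.z2, 0;
     d.D2, 0, 0, 0, -d.w1, 0],
  !![-d.pi3, 0, 0, 0, 0, d.z2;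
     d.D3, 0, 0, 0, 0, -d.w1]]

def homotopy₂ : Fin 5 → Matrix (Fin 6) (Fin 5) R := ![
  !![0, -1, 0, 0, 0;
     0, 0, 0, 0, 0;
     0, 0, -d.pi1, -d.pi2, -d.pi3;
     0, 0, 0, d.u13, -d.u12;
     0, 0, -d.u13, 0, d.u11;
     0, 0, d.u12, -d.u11, 0],
  !![1, 0, 0, 0, 0;
     0, 0, d.pi1, d.pi2, d.pi3;
     0, 0, 0, 0, 0;
     0, 0, 0, d.u23, -d.u22;
     0, 0, -d.u23, 0, d.u21;
     0, 0, d.u22, -d.u21, 0],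
  !![0, 0, 0, 0, 0;
     0, -d.pi1, 0, -d.u13*d.z2, d.u12*d.z2;
     d.pi1, 0, 0, -d.u23*d.z2, d.u22*d.z2;
     0, 0, 0, 0, 0;
     d.u13, d.u23, 0, 0, -d.w1;
     -d.u12, -d.u22, 0, d.w1, 0],
  !![0, 0, 0, 0, 0;
     0, -d.pi2, d.u13*d.z2, 0, -d.u11*d.z2;
     d.pi2, 0, d.u23*d.z2, 0, -d.u21*d.z2;
     -d.u13, -d.u23, 0, 0, d.w1;
     0, 0, 0, 0, 0;
     d.u11, d.u21, -d.w1, 0, 0],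
  !![0, 0, 0, 0, 0;
     0, -d.pi3, -d.u12*d.z2, d.u11*d.z2, 0;
     d.pi3, 0, -d.u22*d.z2, d.u21*d.z2, 0;
     d.u12, d.u22, 0, -d.w1, 0;
     -d.u11, -d.u21, d.w1, 0, 0;
     0, 0, 0, 0, 0]]

theorem homotopy₃_mulVec_b3_mulVec (k : Fin 5) (v : Fin 2 → R) :
    d.homotopy₃ k *ᵥ (d.b3 *ᵥ v) = d.b1 0 k • v := by
  fin_cases k <;> ext i <;> fin_cases i <;>
    simp [homotopy₃, b1, b3, UP1, UP2, D1, D2, D3, mulVec, dotProduct, Fin.sum_univ_succ] <;> ring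

set_option maxHeartbeats 400000 in
theorem b3_mulVec_homotopy₃_mulVec_add (k : Fin 5) (v : Fin 6 → R) :
    d.b3 *ᵥ (d.homotopy₃ k *ᵥ v) + d.homotopy₂ k *ᵥ (d.b2 *ᵥ v) = d.b1 0 k • v := by
  fin_cases k <;> ext i <;> fin_cases i <;>
    simp [homotopy₃, homotopy₂, b1, b2, b3, UP1, UP2, D1, D2, D3, dotProduct,
      Fin.sum_univ_succ] <;> ring

theorem b2_mulVec_homotopy₂_mulVec_add (k : Fin 5) (v : Fin 5 → R) :
    d.b2 *ᵥ (d.homotopy₂ k *ᵥ v) + single k 0 1 *ᵥ (d.b1 *ᵥ v) = d.b1 0 k • v := by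
  fin_cases k <;> ext i <;> fin_cases i <;>
    simp [homotopy₂, b1, b2, UP1, UP2, D1, D2, D3, mulVec, dotProduct, Fin.sum_univ_succ,
      single_apply] <;> ring

theorem b2_mulVec_b3_mulVec (v : Fin 2 → R) : d.b2 *ᵥ (d.b3 *ᵥ v) = 0 := by
  ext i
  fin_cases i <;>
    simp [b2, b3, UP1, UP2, D1, D2, D3, mulVec, dotProduct, Fin.sum_univ_succ] <;> ring

theorem b1_mulVec_b2_mulVec (v : Fin 6 → R) : d.b1 *ᵥ (d.b2 *ᵥ v) = 0 := by
  ext i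
  fin_cases i
  simp [b1, b2, UP1, UP2, D1, D2, D3, mulVec, dotProduct, Fin.sum_univ_succ]
  ring

theorem b1_entry_mem_nullHomotopicIdeal (k : Fin 5) :
    d.b1 0 k ∈ nullHomotopicIdeal d.b1.mulVecLin d.b2.mulVecLin d.b3.mulVecLin :=
  ⟨(single k 0 1 : Matrix (Fin 5) (Fin 1) R).mulVecLin, (d.homotopy₂ k).mulVecLin,
    (d.homotopy₃ k).mulVecLin, LinearMap.ext (d.homotopy₃_mulVec_b3_mulVec k),
    LinearMap.ext (d.b3_mulVec_homotopy₃_mulVec_add k),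
    LinearMap.ext (d.b2_mulVec_homotopy₂_mulVec_add k)⟩

theorem span_le_nullHomotopicIdeal :
    Ideal.span {d.UP1, d.UP2, d.z2 * d.D1 - d.w1 * d.pi1, d.z2 * d.D2 - d.w1 * d.pi2,
      d.z2 * d.D3 - d.w1 * d.pi3} ≤
      nullHomotopicIdeal d.b1.mulVecLin d.b2.mulVecLin d.b3.mulVecLin := by
  rw [Ideal.span_le]
  rintro _ (rfl | rfl | rfl | rfl | rfl)
  exacts [d.b1_entry_mem_nullHomotopicIdeal 0, d.b1_entry_mem_nullHomotopicIdeal 1,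
    d.b1_entry_mem_nullHomotopicIdeal 2, d.b1_entry_mem_nullHomotopicIdeal 3,
    d.b1_entry_mem_nullHomotopicIdeal 4]

end BData

theorem B_acyclic_general {R : Type*} [CommRing R] (d : BData R)
    (hgrade : ∃ rs : List R, rs.length = 3 ∧
      (∀ x ∈ rs, x ∈ Ideal.span {d.UP1, d.UP2, d.z2 * d.D1 - d.w1 * d.pi1,
        d.z2 * d.D2 - d.w1 * d.pi2, d.z2 * d.D3 - d.w1 * d.pi3}) ∧
      RingTheory.Sequence.IsRegular R rs) :
    Function.Injective d.b3.mulVecLin ∧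
    LinearMap.ker d.b2.mulVecLin = LinearMap.range d.b3.mulVecLin ∧
    LinearMap.ker d.b1.mulVecLin = LinearMap.range d.b2.mulVecLin := by
  obtain ⟨rs, hlen, hmem, hreg⟩ := hgrade
  obtain ⟨x₁, x₂, x₃, rfl⟩ := List.length_eq_three.1 hlen
  have hregular := hreg.toIsWeaklyRegular
  exact nullHomotopicIdeal.acyclic_of_isWeaklyRegular (LinearMap.ext d.b2_mulVec_b3_mulVec)
    (LinearMap.ext d.b1_mulVec_b2_mulVec) (fun x hx ↦ d.span_le_nullHomotopicIdeal (hmem x hx))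
    (hregular.pi _) (hregular.pi _) (hregular.pi _)

/-- Theorem: if the ideal generated by the five entries of `b1` contains a regular
sequence of length three, then Brown's complex `B` is acyclic. -/
theorem B_acyclic {R : Type*} [CommRing R] [IsNoetherianRing R] (d : BData R)
    (hgrade : ∃ rs : List R, rs.length = 3 ∧
      (∀ x ∈ rs, x ∈ Ideal.span {d.UP1, d.UP2, d.z2 * d.D1 - d.w1 * d.pi1,
        d.z2 * d.D2 - d.w1 * d.pi2, d.z2 * d.D3 - d.w1 * d.pi3}) ∧
      RingTheory.Sequence.IsRegular R rs) :
    Function.Injective d.b3.mulVecLin ∧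
    LinearMap.ker d.b2.mulVecLin = LinearMap.range d.b3.mulVecLin ∧
    LinearMap.ker d.b1.mulVecLin = LinearMap.range d.b2.mulVecLin :=
  B_acyclic_general d hgrade
end

section
/- The elements n1, n2, n3 form a regular sequence on R, and the colon ideal (n1, n2, n3) : (d0, d1, d2, d3) equals the ideal (n1, n2, n3, L11*A1*B + L21*A2*B + L31*A3, L12*A1*B + L22*A2*B + L32*A3) of R. -/
open MvPolynomial

noncomputable section

/- The polynomial ring `R = R0[L11, L12, L21, L22, L31, L32, d0, A1, A2, A3, B]`,
with the eleven indeterminates indexed as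
`0 ↦ L11, 1 ↦ L12, 2 ↦ L21, 3 ↦ L22, 4 ↦ L31, 5 ↦ L32, 6 ↦ d0, 7 ↦ A1, 8 ↦ A2,
9 ↦ A3, 10 ↦ B`. -/

variable (R0 : Type*) [CommRing R0]

/-- `d1 = L21*L32 - L22*L31`, the first signed maximal minor of `(Lij)`. -/
def d1 : MvPolynomial (Fin 11) R0 := X 2 * X 5 - X 3 * X 4

/-- `d2 = -(L11*L32 - L12*L31)`, the second signed maximal minor of `(Lij)`. -/
def d2 : MvPolynomial (Fin 11) R0 := -(X 0 * X 5 - X 1 * X 4)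

/-- `d3 = L11*L22 - L12*L21`, the third signed maximal minor of `(Lij)`. -/
def d3 : MvPolynomial (Fin 11) R0 := X 0 * X 3 - X 1 * X 2

/-- `n1 = d0*A1 + d1`. -/
def n1 : MvPolynomial (Fin 11) R0 := X 6 * X 7 + d1 R0

/-- `n2 = d0*A2 + d2`. -/
def n2 : MvPolynomial (Fin 11) R0 := X 6 * X 8 + d2 R0

/-- `n3 = d0*A3 + d3*B`. -/
def n3 : MvPolynomial (Fin 11) R0 := X 6 * X 9 + d3 R0 * X 10

section Helpers

set_option linter.unusedSectionVars false
set_option maxHeartbeats 1000000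

variable {R0}
variable [IsDomain R0]

/-- Abbreviation for the ambient polynomial ring. -/
abbrev RR (R0 : Type*) [CommRing R0] := MvPolynomial (Fin 11) R0

/-- The substitution killing the `i`-th variable. -/
def sg (i : Fin 11) : RR R0 →ₐ[R0] RR R0 :=
  aeval (fun j => if j = i then 0 else X j)

@[simp] lemma sg_X (i j : Fin 11) :
    sg (R0 := R0) i (X j) = if j = i then 0 else X j := by
  simp [sg]

lemma X_dvd_sub_sg (i : Fin 11) (f : RR R0) : X i ∣ f - sg i f := by
  induction f using MvPolynomial.induction_on with
  | C a => simp [sg]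
  | add p q hp hq =>
      have : p + q - sg i (p + q) = (p - sg i p) + (q - sg i q) := by
        rw [map_add]; ring
      rw [this]; exact dvd_add hp hq
  | mul_X p j hp =>
      rw [map_mul, sg_X]
      by_cases hj : j = i
      · subst hj; simp
      · rw [if_neg hj]
        have : p * X j - sg i p * X j = (p - sg i p) * X j := by ring
        rw [this]; exact Dvd.dvd.mul_right hp _

lemma X_dvd_of_sg_eq_zero {i : Fin 11} {f : RR R0} (h : sg i f = 0) : X i ∣ f := by
  have := X_dvd_sub_sg i f
  rwa [h, sub_zero] at this

lemma Xcancel {i : Fin 11} {a b : RR R0} (h : X i * a = X i * b) : a = b :=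
  mul_left_cancel₀ (X_ne_zero i) h

lemma Xzero {i : Fin 11} {a : RR R0} (h : X i * a = 0) : a = 0 := by
  rcases mul_eq_zero.mp h with h | h
  · exact absurd h (X_ne_zero i)
  · exact h

lemma ne_zero_of_aeval {p : RR R0} (v : Fin 11 → R0) (h : aeval v p ≠ 0) : p ≠ 0 := by
  intro h0; rw [h0, map_zero] at h; exact h rfl

theorem loc_clear (s : RR R0) (J : Ideal (RR R0))
    (a : Fin 11 → Localization.Away s)
    (h : ∀ i : Fin 11, ∃ (M : ℕ) (r : RR R0),
      s ^ M * X i - r ∈ J ∧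
      algebraMap (RR R0) (Localization.Away s) r
        = (algebraMap (RR R0) (Localization.Away s) s) ^ M * a i)
    (hs : s ≠ 0)
    (f : RR R0)
    (hf : eval₂Hom ((algebraMap (RR R0) (Localization.Away s)).comp C) a f = 0) :
    ∃ N, s ^ N * f ∈ J := by
  set β := algebraMap (RR R0) (Localization.Away s) with hβ
  set φ := eval₂Hom (β.comp C) a with hφ
  have key : ∀ f : RR R0, ∃ (N : ℕ) (F : RR R0),
      s ^ N * f - F ∈ J ∧ β F = β s ^ N * φ f := by
    intro f
    induction f using MvPolynomial.induction_on with
    | C r =>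
        refine ⟨0, C r, ?_, ?_⟩
        · simp
        · simp [hφ]
    | add p q hp hq =>
        obtain ⟨Np, Fp, h1p, h2p⟩ := hp
        obtain ⟨Nq, Fq, h1q, h2q⟩ := hq
        refine ⟨Np + Nq, s ^ Nq * Fp + s ^ Np * Fq, ?_, ?_⟩
        · have : s ^ (Np + Nq) * (p + q) - (s ^ Nq * Fp + s ^ Np * Fq)
              = s ^ Nq * (s ^ Np * p - Fp) + s ^ Np * (s ^ Nq * q - Fq) := by ring
          rw [this]
          exact Ideal.add_mem _ (Ideal.mul_mem_left _ _ h1p) (Ideal.mul_mem_left _ _ h1q)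
        · rw [map_add, map_mul, map_mul, h2p, h2q, map_add]
          simp only [map_pow]
          ring
    | mul_X p i hp =>
        obtain ⟨N, F, h1, h2⟩ := hp
        obtain ⟨M, r, hr1, hr2⟩ := h i
        refine ⟨N + M, F * r, ?_, ?_⟩
        · have : s ^ (N + M) * (p * X i) - F * r
              = (s ^ M * X i) * (s ^ N * p - F) + F * (s ^ M * X i - r) := by ring
          rw [this]
          exact Ideal.add_mem _ (Ideal.mul_mem_left _ _ h1) (Ideal.mul_mem_left _ _ hr1)
        · rw [map_mul, h2, hr2, map_mul]
          have : φ (X i) = a i := by simp [hφ]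
          rw [this, pow_add]
          ring
  obtain ⟨N, F, h1, h2⟩ := key f
  rw [hf, mul_zero] at h2
  have hinj : Function.Injective β :=
    IsLocalization.injective (Localization.Away s)
      (powers_le_nonZeroDivisors_of_noZeroDivisors hs)
  have hF : F = 0 := hinj (by rw [h2, map_zero])
  rw [hF, sub_zero] at h1
  exact ⟨N, h1⟩

lemma desc_pow {s : RR R0} {J : Ideal (RR R0)}
    (step : ∀ h, s * h ∈ J → h ∈ J) :
    ∀ (N : ℕ) (h : RR R0), s ^ N * h ∈ J → h ∈ J := by
  intro N
  induction N with
  | zero => intro h hh; simpa using hh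
  | succ n ih =>
      intro h hh
      have : s ^ n * (s * h) ∈ J := by
        rw [show s ^ n * (s * h) = s ^ (n+1) * h by ring]; exact hh
      exact step h (ih _ this)

lemma d1_ne : d1 R0 ≠ 0 := by
  apply ne_zero_of_aeval (fun i => if i = 2 then 1 else if i = 5 then 1 else 0)
  simp [d1]

lemma d2_ne : d2 R0 ≠ 0 := by
  apply ne_zero_of_aeval (fun i => if i = 1 then 1 else if i = 4 then 1 else 0)
  simp [d2]

lemma n2_ne : n2 R0 ≠ 0 := by
  apply ne_zero_of_aeval (fun i => if i = 6 then 1 else if i = 8 then 1 else 0)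
  simp [n2, d2]

lemma n3_ne : n3 R0 ≠ 0 := by
  apply ne_zero_of_aeval (fun i => if i = 6 then 1 else if i = 9 then 1 else 0)
  simp [n3, d3]

lemma n1_ne : n1 R0 ≠ 0 := by
  apply ne_zero_of_aeval (fun i => if i = 6 then 1 else if i = 7 then 1 else 0)
  simp [n1, d1]

lemma desc_d2 (h : RR R0) (hh : X 5 * h ∈ Ideal.span {d2 R0}) :
    h ∈ Ideal.span {d2 R0} := by
  rw [Ideal.mem_span_singleton] at hh ⊢
  obtain ⟨t, ht⟩ := hh
  have h5 : sg 5 (X 5 * h) = sg 5 (d2 R0 * t) := by rw [ht]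
  rw [map_mul, map_mul] at h5
  simp only [sg_X] at h5
  simp only [if_true, zero_mul] at h5
  have hd2 : sg 5 (d2 R0) = X 1 * X 4 := by
    simp [d2]
  rw [hd2] at h5
  have h1 : (X 1 : RR R0) * (X 4 * sg 5 t) = 0 := by rw [← mul_assoc]; exact h5.symm
  have h2 : sg 5 t = 0 := Xzero (Xzero h1)
  obtain ⟨t', ht'⟩ := X_dvd_of_sg_eq_zero h2
  refine ⟨t', Xcancel (i := 5) ?_⟩
  rw [ht, ht']; ring

lemma d2_dvd {u t : RR R0} (h : u * d1 R0 = t * d2 R0) : d2 R0 ∣ u := by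
  have hs : (X 5 : RR R0) ≠ 0 := X_ne_zero _
  letI : IsDomain (Localization.Away (X 5 : RR R0)) :=
    IsLocalization.isDomain_localization (powers_le_nonZeroDivisors_of_noZeroDivisors hs)
  set β := algebraMap (RR R0) (Localization.Away (X 5 : RR R0)) with hβ
  set iv := IsLocalization.Away.invSelf (S := Localization.Away (X 5 : RR R0)) (X 5 : RR R0)
    with hiv
  set av : Fin 11 → Localization.Away (X 5 : RR R0) := fun j =>
    if j = 0 then β (X 1 * X 4) * iv else β (X j) with hav
  set φ := eval₂Hom (β.comp C) av with hφ
  have hinv : β (X 5) * iv = 1 := IsLocalization.Away.mul_invSelf _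
  have hφX : ∀ j, φ (X j) = av j := by intro j; simp [hφ]
  have hv0 : φ (X 0) = β (X 1 * X 4) * iv := by rw [hφX]; simp [hav]
  have hv : ∀ j : Fin 11, j ≠ 0 → φ (X j) = β (X j) := by
    intro j hj; rw [hφX, hav]; simp [hj]
  have hrel : ∀ i : Fin 11, ∃ (M : ℕ) (r : RR R0),
      (X 5 : RR R0) ^ M * X i - r ∈ Ideal.span {d2 R0} ∧
      β r = (β (X 5)) ^ M * av i := by
    intro i
    by_cases hi : i = 0
    · subst hi
      refine ⟨1, X 1 * X 4, ?_, ?_⟩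
      · rw [Ideal.mem_span_singleton]
        exact ⟨-1, by simp [d2]; ring⟩
      · have : av 0 = β (X 1 * X 4) * iv := by simp [hav]
        rw [this, pow_one,
          show β (X 5) * (β (X 1 * X 4) * iv) = β (X 1 * X 4) * (β (X 5) * iv) from by ring,
          hinv, mul_one]
    · refine ⟨0, X i, by simp, ?_⟩
      have : av i = β (X i) := by simp [hav, hi]
      rw [this, pow_zero, one_mul]
  have hφd2 : φ (d2 R0) = 0 := by
    have : φ (d2 R0) = -(φ (X 0) * φ (X 5) - φ (X 1) * φ (X 4)) := by
      rw [d2]; push_cast [map_neg, map_sub, map_mul]; rfl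
    rw [this, hv0, hv 5 (by decide), hv 1 (by decide), hv 4 (by decide),
      show β (X 1 * X 4) * iv * β (X 5) = β (X 1 * X 4) * (β (X 5) * iv) from by ring,
      hinv, mul_one, map_mul, sub_self, neg_zero]
  have hφd1 : φ (d1 R0) = β (d1 R0) := by
    have : φ (d1 R0) = φ (X 2) * φ (X 5) - φ (X 3) * φ (X 4) := by
      rw [d1]; push_cast [map_sub, map_mul]; rfl
    rw [this, hv 2 (by decide), hv 5 (by decide), hv 3 (by decide), hv 4 (by decide), d1,
      map_sub, map_mul, map_mul]
  have hβinj : Function.Injective β :=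
    IsLocalization.injective (Localization.Away (X 5 : RR R0))
      (powers_le_nonZeroDivisors_of_noZeroDivisors hs)
  have hβd1 : β (d1 R0) ≠ 0 := by
    intro h0
    exact d1_ne (hβinj (by rw [h0, map_zero]))
  have hu : φ u = 0 := by
    have := congrArg φ h
    rw [map_mul, map_mul, hφd1, hφd2, mul_zero] at this
    rcases mul_eq_zero.mp this with h0 | h0
    · exact h0
    · exact absurd h0 hβd1
  obtain ⟨N, hN⟩ := loc_clear (X 5) (Ideal.span {d2 R0}) av hrel hs u hu
  have := desc_pow desc_d2 N u hN
  rwa [Ideal.mem_span_singleton] at this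


lemma sg6_n1 : sg 6 (n1 R0) = d1 R0 := by
  simp [n1, d1]

lemma sg6_n2 : sg 6 (n2 R0) = d2 R0 := by
  simp [n2, d2]

lemma sg6_n3 : sg 6 (n3 R0) = d3 R0 * X 10 := by
  simp [n3, d3]

lemma desc_n1 (h : RR R0) (hh : X 6 * h ∈ Ideal.span {n1 R0}) :
    h ∈ Ideal.span {n1 R0} := by
  rw [Ideal.mem_span_singleton] at hh ⊢
  obtain ⟨t, ht⟩ := hh
  have h6 : sg 6 (X 6 * h) = sg 6 (n1 R0 * t) := by rw [ht]
  rw [map_mul, map_mul, sg6_n1] at h6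
  simp only [sg_X, if_true, zero_mul] at h6
  have h2 : sg 6 t = 0 := by
    rcases mul_eq_zero.mp h6.symm with h0 | h0
    · exact absurd h0 d1_ne
    · exact h0
  obtain ⟨t', ht'⟩ := X_dvd_of_sg_eq_zero h2
  refine ⟨t', Xcancel (i := 6) ?_⟩
  rw [ht, ht']; ring

lemma reg2 {g : RR R0} (h : n2 R0 * g ∈ Ideal.span {n1 R0}) :
    g ∈ Ideal.span {n1 R0} := by
  have hs : (X 6 : RR R0) ≠ 0 := X_ne_zero _
  letI : IsDomain (Localization.Away (X 6 : RR R0)) :=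
    IsLocalization.isDomain_localization (powers_le_nonZeroDivisors_of_noZeroDivisors hs)
  set β := algebraMap (RR R0) (Localization.Away (X 6 : RR R0)) with hβ
  set iv := IsLocalization.Away.invSelf (S := Localization.Away (X 6 : RR R0)) (X 6 : RR R0)
    with hiv
  set av : Fin 11 → Localization.Away (X 6 : RR R0) := fun j =>
    if j = 7 then β (-(d1 R0)) * iv else β (X j) with hav
  set φ := eval₂Hom (β.comp C) av with hφ
  have hinv : β (X 6) * iv = 1 := IsLocalization.Away.mul_invSelf _
  have hφX : ∀ j, φ (X j) = av j := by intro j; simp [hφ]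
  have hv7 : φ (X 7) = β (-(d1 R0)) * iv := by rw [hφX]; simp [hav]
  have hv : ∀ j : Fin 11, j ≠ 7 → φ (X j) = β (X j) := by
    intro j hj; rw [hφX, hav]; simp [hj]
  have hrel : ∀ i : Fin 11, ∃ (M : ℕ) (r : RR R0),
      (X 6 : RR R0) ^ M * X i - r ∈ Ideal.span {n1 R0} ∧
      β r = (β (X 6)) ^ M * av i := by
    intro i
    by_cases hi : i = 7
    · subst hi
      refine ⟨1, -(d1 R0), ?_, ?_⟩
      · rw [Ideal.mem_span_singleton]
        exact ⟨1, by rw [n1]; ring⟩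
      · have : av 7 = β (-(d1 R0)) * iv := by simp [hav]
        rw [this, pow_one,
          show β (X 6) * (β (-(d1 R0)) * iv) = β (-(d1 R0)) * (β (X 6) * iv) from by ring,
          hinv, mul_one]
    · refine ⟨0, X i, by simp, ?_⟩
      have : av i = β (X i) := by simp [hav, hi]
      rw [this, pow_zero, one_mul]
  have hφd1 : φ (d1 R0) = β (d1 R0) := by
    have : φ (d1 R0) = φ (X 2) * φ (X 5) - φ (X 3) * φ (X 4) := by
      rw [d1]; push_cast [map_sub, map_mul]; rfl
    rw [this, hv 2 (by decide), hv 5 (by decide), hv 3 (by decide), hv 4 (by decide), d1,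
      map_sub, map_mul, map_mul]
  have hφn1 : φ (n1 R0) = 0 := by
    have : φ (n1 R0) = φ (X 6) * φ (X 7) + φ (d1 R0) := by
      rw [n1]; push_cast [map_add, map_mul]; rfl
    rw [this, hv 6 (by decide), hv7, hφd1,
      show β (X 6) * (β (-(d1 R0)) * iv) = β (-(d1 R0)) * (β (X 6) * iv) from by ring,
      hinv, mul_one, map_neg, neg_add_cancel]
  have hφn2 : φ (n2 R0) = β (n2 R0) := by
    have : φ (n2 R0) = φ (X 6) * φ (X 8) + -(φ (X 0) * φ (X 5) - φ (X 1) * φ (X 4)) := by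
      rw [n2, d2]; push_cast [map_add, map_neg, map_sub, map_mul]; rfl
    rw [this, hv 6 (by decide), hv 8 (by decide), hv 0 (by decide), hv 5 (by decide),
      hv 1 (by decide), hv 4 (by decide), n2, d2]
    push_cast [map_add, map_neg, map_sub, map_mul]
    ring
  have hβinj : Function.Injective β :=
    IsLocalization.injective (Localization.Away (X 6 : RR R0))
      (powers_le_nonZeroDivisors_of_noZeroDivisors hs)
  have hβn2 : β (n2 R0) ≠ 0 := by
    intro h0
    exact n2_ne (hβinj (by rw [h0, map_zero]))
  rw [Ideal.mem_span_singleton] at h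
  obtain ⟨k, hk⟩ := h
  have hg : φ g = 0 := by
    have := congrArg φ hk
    rw [map_mul, map_mul, hφn1, hφn2, zero_mul] at this
    rcases mul_eq_zero.mp this with h0 | h0
    · exact absurd h0 hβn2
    · exact h0
  obtain ⟨N, hN⟩ := loc_clear (X 6) (Ideal.span {n1 R0}) av hrel hs g hg
  exact desc_pow desc_n1 N g hN

lemma desc_n12 (h : RR R0) (hh : X 6 * h ∈ Ideal.span {n1 R0, n2 R0}) :
    h ∈ Ideal.span {n1 R0, n2 R0} := by
  rw [Ideal.mem_span_pair] at hh ⊢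
  obtain ⟨x, y, hxy⟩ := hh
  have h0 : sg 6 x * d1 R0 + sg 6 y * d2 R0 = 0 := by
    have := congrArg (sg 6) hxy
    rw [map_add, map_mul, map_mul, map_mul, sg6_n1, sg6_n2] at this
    simp only [sg_X, if_true, zero_mul] at this
    exact this
  have hdvd : d2 R0 ∣ sg 6 x := by
    apply d2_dvd (t := -(sg 6 y))
    linear_combination h0
  obtain ⟨w, hw⟩ := hdvd
  have hy : sg 6 y = -(w * d1 R0) := by
    have hz : d2 R0 * (w * d1 R0 + sg 6 y) = 0 := by linear_combination h0 - d1 R0 * hw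
    rcases mul_eq_zero.mp hz with h1 | h1
    · exact absurd h1 d2_ne
    · linear_combination h1
  obtain ⟨xa, hxa⟩ := X_dvd_sub_sg 6 x
  obtain ⟨ya, hya⟩ := X_dvd_sub_sg 6 y
  have hx2 : x = d2 R0 * w + X 6 * xa := by rw [← hw]; linear_combination hxa
  have hy2 : y = -(w * d1 R0) + X 6 * ya := by rw [← hy]; linear_combination hya
  have key : X 6 * h
      = X 6 * (w * (X 7 * n2 R0 - X 8 * n1 R0) + xa * n1 R0 + ya * n2 R0) := by
    rw [← hxy, hx2, hy2]
    simp only [n1, n2, d1, d2]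
    ring
  have hhe := Xcancel (i := 6) key
  exact ⟨xa - w * X 8, ya + w * X 7, by rw [hhe]; ring⟩

lemma reg3 {g : RR R0} (h : n3 R0 * g ∈ Ideal.span {n1 R0, n2 R0}) :
    g ∈ Ideal.span {n1 R0, n2 R0} := by
  have hs : (X 6 : RR R0) ≠ 0 := X_ne_zero _
  letI : IsDomain (Localization.Away (X 6 : RR R0)) :=
    IsLocalization.isDomain_localization (powers_le_nonZeroDivisors_of_noZeroDivisors hs)
  set β := algebraMap (RR R0) (Localization.Away (X 6 : RR R0)) with hβ
  set iv := IsLocalization.Away.invSelf (S := Localization.Away (X 6 : RR R0)) (X 6 : RR R0)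
    with hiv
  set av : Fin 11 → Localization.Away (X 6 : RR R0) := fun j =>
    if j = 7 then β (-(d1 R0)) * iv else if j = 8 then β (-(d2 R0)) * iv else β (X j)
    with hav
  set φ := eval₂Hom (β.comp C) av with hφ
  have hinv : β (X 6) * iv = 1 := IsLocalization.Away.mul_invSelf _
  have hφX : ∀ j, φ (X j) = av j := by intro j; simp [hφ]
  have hv7 : φ (X 7) = β (-(d1 R0)) * iv := by rw [hφX]; simp [hav]
  have hv8 : φ (X 8) = β (-(d2 R0)) * iv := by rw [hφX]; simp [hav]
  have hv : ∀ j : Fin 11, j ≠ 7 → j ≠ 8 → φ (X j) = β (X j) := by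
    intro j hj7 hj8; rw [hφX, hav]; simp [hj7, hj8]
  have hrel : ∀ i : Fin 11, ∃ (M : ℕ) (r : RR R0),
      (X 6 : RR R0) ^ M * X i - r ∈ Ideal.span {n1 R0, n2 R0} ∧
      β r = (β (X 6)) ^ M * av i := by
    intro i
    by_cases hi7 : i = 7
    · subst hi7
      refine ⟨1, -(d1 R0), ?_, ?_⟩
      · rw [Ideal.mem_span_pair]
        exact ⟨1, 0, by rw [n1]; ring⟩
      · have : av 7 = β (-(d1 R0)) * iv := by simp [hav]
        rw [this, pow_one,
          show β (X 6) * (β (-(d1 R0)) * iv) = β (-(d1 R0)) * (β (X 6) * iv) from by ring,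
          hinv, mul_one]
    · by_cases hi8 : i = 8
      · subst hi8
        refine ⟨1, -(d2 R0), ?_, ?_⟩
        · rw [Ideal.mem_span_pair]
          exact ⟨0, 1, by rw [n2]; ring⟩
        · have : av 8 = β (-(d2 R0)) * iv := by simp [hav]
          rw [this, pow_one,
            show β (X 6) * (β (-(d2 R0)) * iv) = β (-(d2 R0)) * (β (X 6) * iv) from by ring,
            hinv, mul_one]
      · refine ⟨0, X i, by simp, ?_⟩
        have : av i = β (X i) := by simp [hav, hi7, hi8]
        rw [this, pow_zero, one_mul]
  have hφd1 : φ (d1 R0) = β (d1 R0) := by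
    have : φ (d1 R0) = φ (X 2) * φ (X 5) - φ (X 3) * φ (X 4) := by
      rw [d1]; push_cast [map_sub, map_mul]; rfl
    rw [this, hv 2 (by decide) (by decide), hv 5 (by decide) (by decide),
      hv 3 (by decide) (by decide), hv 4 (by decide) (by decide), d1,
      map_sub, map_mul, map_mul]
  have hφd2 : φ (d2 R0) = β (d2 R0) := by
    have : φ (d2 R0) = -(φ (X 0) * φ (X 5) - φ (X 1) * φ (X 4)) := by
      rw [d2]; push_cast [map_neg, map_sub, map_mul]; rfl
    rw [this, hv 0 (by decide) (by decide), hv 5 (by decide) (by decide),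
      hv 1 (by decide) (by decide), hv 4 (by decide) (by decide), d2,
      map_neg, map_sub, map_mul, map_mul]
  have hφn1 : φ (n1 R0) = 0 := by
    have : φ (n1 R0) = φ (X 6) * φ (X 7) + φ (d1 R0) := by
      rw [n1]; push_cast [map_add, map_mul]; rfl
    rw [this, hv 6 (by decide) (by decide), hv7, hφd1,
      show β (X 6) * (β (-(d1 R0)) * iv) = β (-(d1 R0)) * (β (X 6) * iv) from by ring,
      hinv, mul_one, map_neg, neg_add_cancel]
  have hφn2 : φ (n2 R0) = 0 := by
    have : φ (n2 R0) = φ (X 6) * φ (X 8) + φ (d2 R0) := by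
      rw [n2]; push_cast [map_add, map_mul]; rfl
    rw [this, hv 6 (by decide) (by decide), hv8, hφd2,
      show β (X 6) * (β (-(d2 R0)) * iv) = β (-(d2 R0)) * (β (X 6) * iv) from by ring,
      hinv, mul_one, map_neg, neg_add_cancel]
  have hφn3 : φ (n3 R0) = β (n3 R0) := by
    have : φ (n3 R0) = φ (X 6) * φ (X 9)
        + (φ (X 0) * φ (X 3) - φ (X 1) * φ (X 2)) * φ (X 10) := by
      rw [n3, d3]; push_cast [map_add, map_sub, map_mul]; rfl
    rw [this, hv 6 (by decide) (by decide), hv 9 (by decide) (by decide),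
      hv 0 (by decide) (by decide), hv 3 (by decide) (by decide),
      hv 1 (by decide) (by decide), hv 2 (by decide) (by decide),
      hv 10 (by decide) (by decide), n3, d3]
    push_cast [map_add, map_sub, map_mul]
    ring
  have hβinj : Function.Injective β :=
    IsLocalization.injective (Localization.Away (X 6 : RR R0))
      (powers_le_nonZeroDivisors_of_noZeroDivisors hs)
  have hβn3 : β (n3 R0) ≠ 0 := by
    intro h0
    exact n3_ne (hβinj (by rw [h0, map_zero]))
  rw [Ideal.mem_span_pair] at h
  obtain ⟨k1, k2, hk⟩ := h
  have hg : φ g = 0 := by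
    have := congrArg φ hk.symm
    rw [map_mul, map_add, map_mul, map_mul, hφn1, hφn2, hφn3, mul_zero, mul_zero,
      add_zero] at this
    rcases mul_eq_zero.mp this with h0 | h0
    · exact absurd h0 hβn3
    · exact h0
  obtain ⟨N, hN⟩ := loc_clear (X 6) (Ideal.span {n1 R0, n2 R0}) av hrel hs g hg
  exact desc_pow desc_n12 N g hN


/-- First extra generator of the link. -/
def g1p : RR R0 := X 0 * X 7 * X 10 + X 2 * X 8 * X 10 + X 4 * X 9

/-- Second extra generator of the link. -/
def g2p : RR R0 := X 1 * X 7 * X 10 + X 3 * X 8 * X 10 + X 5 * X 9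

lemma mem_span_triple {w x y z : RR R0} :
    w ∈ Ideal.span {x, y, z} ↔ ∃ a b c, a * x + b * y + c * z = w := by
  constructor
  · intro hw
    rw [show ({x, y, z} : Set (RR R0)) = insert x {y, z} from rfl,
      Ideal.mem_span_insert] at hw
    obtain ⟨a, u, hu, hw⟩ := hw
    obtain ⟨b, c, hbc⟩ := Ideal.mem_span_pair.mp hu
    exact ⟨a, b, c, by rw [hw, ← hbc]; ring⟩
  · rintro ⟨a, b, c, rfl⟩
    refine Ideal.add_mem _ (Ideal.add_mem _ ?_ ?_) ?_ <;>
      exact Ideal.mul_mem_left _ _ (Ideal.subset_span (by simp))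

lemma mem_span5 (x1 x2 x3 x4 x5 a b c d e : RR R0) :
    a * x1 + b * x2 + c * x3 + d * x4 + e * x5 ∈ Ideal.span {x1, x2, x3, x4, x5} := by
  refine Ideal.add_mem _ (Ideal.add_mem _ (Ideal.add_mem _ (Ideal.add_mem _ ?_ ?_) ?_) ?_) ?_ <;>
    exact Ideal.mul_mem_left _ _ (Ideal.subset_span (by simp))

lemma colon_sub {f : RR R0} (hf : f * X 6 ∈ Ideal.span {n1 R0, n2 R0, n3 R0}) :
    f ∈ Ideal.span {n1 R0, n2 R0, n3 R0, g1p (R0 := R0), g2p (R0 := R0)} := by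
  obtain ⟨x, y, z, hxyz⟩ := mem_span_triple.mp hf
  have h0 : sg 6 x * d1 R0 + sg 6 y * d2 R0 + (sg 6 z * X 10) * d3 R0 = 0 := by
    have h6 := congrArg (sg 6) hxyz
    rw [map_add, map_add, map_mul, map_mul, map_mul, map_mul,
      sg6_n1, sg6_n2, sg6_n3] at h6
    simp [sg_X] at h6
    linear_combination h6
  have huv : (sg 6 x * X 5 - (sg 6 z * X 10) * X 1) * d1 R0
      = (-(sg 6 y * X 5 - (sg 6 z * X 10) * X 3)) * d2 R0 := by
    simp only [d1, d2, d3] at h0 ⊢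
    linear_combination (X 5 : RR R0) * h0
  obtain ⟨w, hw⟩ := d2_dvd huv
  have hv : sg 6 y * X 5 - (sg 6 z * X 10) * X 3 = -(d1 R0 * w) := by
    have hz2 : d2 R0
        * (w * d1 R0 + (sg 6 y * X 5 - (sg 6 z * X 10) * X 3)) = 0 := by
      linear_combination huv - d1 R0 * hw
    rcases mul_eq_zero.mp hz2 with h1 | h1
    · exact absurd h1 d2_ne
    · linear_combination h1
  have heq1 : X 5 * (sg 6 x + w * X 0) = X 1 * (sg 6 z * X 10 + w * X 4) := by
    simp only [d2] at hw
    linear_combination hw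
  have hq0 : sg 5 (sg 6 z * X 10 + w * X 4) = 0 := by
    have h5 := congrArg (sg 5) heq1
    simp [sg_X] at h5
    rw [map_add, map_mul, map_mul]
    simp [sg_X]
    linear_combination h5
  obtain ⟨q, hq⟩ := X_dvd_of_sg_eq_zero hq0
  have hx5 : sg 6 x = -(w * X 0) + X 1 * q := by
    apply Xcancel (i := 5)
    linear_combination heq1 + X 1 * hq
  have hy5 : sg 6 y = -(w * X 2) + q * X 3 := by
    apply Xcancel (i := 5)
    simp only [d1] at hv
    linear_combination hv + X 3 * hq
  have hA : sg 10 w * X 4 = X 5 * sg 10 q := by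
    have h10 := congrArg (sg 10) hq
    rw [map_add, map_mul, map_mul, map_mul] at h10
    simp [sg_X] at h10
    linear_combination h10
  have hw0 : sg 5 (sg 10 w) = 0 := by
    have h5 := congrArg (sg 5) hA
    simp [sg_X] at h5
    exact h5
  obtain ⟨tt, htt⟩ := X_dvd_of_sg_eq_zero hw0
  have hq0' : sg 10 q = X 4 * tt := by
    apply Xcancel (i := 5)
    linear_combination X 4 * htt - hA
  obtain ⟨w1, hw1⟩ := X_dvd_sub_sg 10 w
  obtain ⟨q1, hq1⟩ := X_dvd_sub_sg 10 q
  have hz10 : sg 6 z = X 5 * q1 - X 4 * w1 := by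
    apply Xcancel (i := 10)
    linear_combination hq - X 4 * hw1 - X 4 * htt + X 5 * hq1 + X 5 * hq0'
  obtain ⟨xa, hxa⟩ := X_dvd_sub_sg 6 x
  obtain ⟨ya, hya⟩ := X_dvd_sub_sg 6 y
  obtain ⟨za, hza⟩ := X_dvd_sub_sg 6 z
  have hxf : x = -(w * X 0) + X 1 * q + X 6 * xa := by
    rw [← hx5]; linear_combination hxa
  have hyf : y = -(w * X 2) + q * X 3 + X 6 * ya := by
    rw [← hy5]; linear_combination hya
  have hzf : z = X 5 * q1 - X 4 * w1 + X 6 * za := by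
    rw [← hz10]; linear_combination hza
  have hwf : w = X 5 * tt + X 10 * w1 := by
    rw [← htt]; linear_combination hw1
  have hqf : q = X 4 * tt + X 10 * q1 := by
    rw [← hq0']; linear_combination hq1
  set G := (xa - tt * X 8) * n1 R0 + (ya + tt * X 7) * n2 R0 + za * n3 R0
      + (-w1) * g1p (R0 := R0) + q1 * g2p (R0 := R0) with hG
  have key : X 6 * f = X 6 * G := by
    have : x * n1 R0 + y * n2 R0 + z * n3 R0 = X 6 * G := by
      rw [hxf, hyf, hzf, hwf, hqf, hG]
      simp only [n1, n2, n3, d1, d2, d3, g1p, g2p]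
      ring
    rw [← this, hxyz]; ring
  have hfG : f = G := Xcancel (i := 6) key
  rw [hfG, hG]
  exact mem_span5 _ _ _ _ _ _ _ _ _ _


lemma isSMulRegular_of (J : Ideal (RR R0)) (r : RR R0)
    (h : ∀ g, r * g ∈ J → g ∈ J) :
    IsSMulRegular ((RR R0) ⧸ (J • (⊤ : Submodule (RR R0) (RR R0)))) r := by
  have hJ : (J • (⊤ : Submodule (RR R0) (RR R0))) = J := by
    rw [Ideal.smul_eq_mul, Ideal.mul_top]
  intro a b hab
  obtain ⟨a, rfl⟩ := Submodule.Quotient.mk_surjective _ a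
  obtain ⟨b, rfl⟩ := Submodule.Quotient.mk_surjective _ b
  dsimp only at hab
  rw [← Submodule.Quotient.mk_smul, ← Submodule.Quotient.mk_smul,
    Submodule.Quotient.eq] at hab
  rw [Submodule.Quotient.eq]
  rw [hJ] at hab ⊢
  have : r * (a - b) ∈ J := by
    have : r • a - r • b = r * (a - b) := by
      rw [smul_eq_mul, smul_eq_mul]; ring
    rwa [this] at hab
  exact h _ this

lemma aeval_zero_eq_zero_n1 : aeval (fun _ => (0 : R0)) (n1 R0) = 0 := by
  simp [n1, d1]

lemma aeval_zero_eq_zero_n2 : aeval (fun _ => (0 : R0)) (n2 R0) = 0 := by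
  simp [n2, d2]

lemma aeval_zero_eq_zero_n3 : aeval (fun _ => (0 : R0)) (n3 R0) = 0 := by
  simp [n3, d3]

lemma colon_helper {g : RR R0}
    (hgen : ∀ d ∈ ({X 6, d1 R0, d2 R0, d3 R0} : Set (RR R0)),
      g * d ∈ Ideal.span {n1 R0, n2 R0, n3 R0}) :
    ∀ p ∈ Ideal.span ({X 6, d1 R0, d2 R0, d3 R0} : Set (RR R0)),
      g • p ∈ Ideal.span {n1 R0, n2 R0, n3 R0} := by
  intro p hp
  induction hp using Submodule.span_induction with
  | mem x hx => rw [smul_eq_mul]; exact hgen x hx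
  | zero => simp
  | add a b _ _ ha hb => rw [smul_add]; exact Ideal.add_mem _ ha hb
  | smul r a _ ha =>
      rw [smul_eq_mul] at ha ⊢
      rw [show g * (r • a) = r * (g * a) by rw [smul_eq_mul]; ring]
      exact Ideal.mul_mem_left _ _ ha

end Helpers

/-- Example 6.1: `n1, n2, n3` is a regular sequence on `R`, and
`(n1, n2, n3) : (d0, d1, d2, d3)
  = (n1, n2, n3, L11*A1*B + L21*A2*B + L31*A3, L12*A1*B + L22*A2*B + L32*A3)`. -/
theorem linkage_of_Brown_complex [IsDomain R0] [IsNoetherianRing R0] :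
    RingTheory.Sequence.IsRegular (MvPolynomial (Fin 11) R0) [n1 R0, n2 R0, n3 R0] ∧
    Submodule.colon (Ideal.span {n1 R0, n2 R0, n3 R0})
        (Ideal.span {X 6, d1 R0, d2 R0, d3 R0}) =
      Ideal.span {n1 R0, n2 R0, n3 R0,
        X 0 * X 7 * X 10 + X 2 * X 8 * X 10 + X 4 * X 9,
        X 1 * X 7 * X 10 + X 3 * X 8 * X 10 + X 5 * X 9} := by
  constructor
  · -- regularity
    rw [RingTheory.Sequence.isRegular_iff]
    constructor
    · rw [RingTheory.Sequence.isWeaklyRegular_iff]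
      intro i hi
      simp only [List.length_cons, List.length_nil] at hi
      interval_cases i
      · -- n1 is regular on R
        simp only [List.take_zero, Ideal.ofList_nil, List.getElem_cons_zero]
        apply isSMulRegular_of
        intro g hg
        rw [show Ideal.ofList ([] : List (MvPolynomial (Fin 11) R0)) = ⊥ from
          Ideal.ofList_nil, Ideal.mem_bot] at hg ⊢
        rcases mul_eq_zero.mp hg with h0 | h0
        · exact absurd h0 n1_ne
        · exact h0
      · -- n2 is regular mod n1
        have hL : Ideal.ofList (List.take 1 [n1 R0, n2 R0, n3 R0])
            = Ideal.span {n1 R0} := by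
          simp only [List.take_succ_cons, List.take_zero]
          exact Ideal.ofList_singleton _
        rw [hL]
        simp only [List.getElem_cons_succ, List.getElem_cons_zero]
        exact isSMulRegular_of _ _ (fun g hg => reg2 hg)
      · -- n3 is regular mod (n1, n2)
        have hL : Ideal.ofList (List.take 2 [n1 R0, n2 R0, n3 R0])
            = Ideal.span {n1 R0, n2 R0} := by
          simp only [List.take_succ_cons, List.take_zero]
          rw [Ideal.ofList_cons, Ideal.ofList_singleton, ← Ideal.span_union,
            Set.singleton_union]
        rw [hL]
        simp only [List.getElem_cons_succ, List.getElem_cons_zero]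
        exact isSMulRegular_of _ _ (fun g hg => reg3 hg)
    · -- the quotient is nonzero
      intro htop
      have hL : Ideal.ofList [n1 R0, n2 R0, n3 R0]
          = Ideal.span {n1 R0, n2 R0, n3 R0} := by
        rw [Ideal.ofList_cons, Ideal.ofList_cons, Ideal.ofList_singleton,
          ← Ideal.span_union, Set.singleton_union, ← Ideal.span_union,
          Set.singleton_union]
      have h1 : (1 : MvPolynomial (Fin 11) R0)
          ∈ Ideal.span {n1 R0, n2 R0, n3 R0} := by
        have : (1 : MvPolynomial (Fin 11) R0)
            ∈ Ideal.ofList [n1 R0, n2 R0, n3 R0] • (⊤ : Submodule _ _) :=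
          htop ▸ Submodule.mem_top
        rwa [Ideal.smul_eq_mul, Ideal.mul_top, hL] at this
      obtain ⟨a, b, c, habc⟩ := mem_span_triple.mp h1
      have := congrArg (aeval (fun _ => (0 : R0))) habc
      rw [map_add, map_add, map_mul, map_mul, map_mul, map_one,
        aeval_zero_eq_zero_n1, aeval_zero_eq_zero_n2, aeval_zero_eq_zero_n3,
        mul_zero, mul_zero, mul_zero, add_zero, add_zero] at this
      exact zero_ne_one this
  · -- the colon ideal computation
    apply le_antisymm
    · intro f hf
      have hf6 : f * X 6 ∈ Ideal.span {n1 R0, n2 R0, n3 R0} := by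
        have := Submodule.mem_colon.mp hf (X 6) (Ideal.subset_span (Set.mem_insert _ _))
        rwa [smul_eq_mul] at this
      exact colon_sub hf6
    · rw [Ideal.span_le]
      rintro g hg
      simp only [Set.mem_insert_iff, Set.mem_singleton_iff] at hg
      rw [SetLike.mem_coe, Submodule.mem_colon]
      rcases hg with rfl | rfl | rfl | rfl | rfl
      · exact colon_helper (fun d _ =>
          Ideal.mul_mem_right d _ (Ideal.subset_span (by simp)))
      · exact colon_helper (fun d _ =>
          Ideal.mul_mem_right d _ (Ideal.subset_span (by simp)))
      · exact colon_helper (fun d _ =>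
          Ideal.mul_mem_right d _ (Ideal.subset_span (by simp)))
      · -- g = g1
        apply colon_helper
        intro d hd
        simp only [Set.mem_insert_iff, Set.mem_singleton_iff] at hd
        rcases hd with rfl | rfl | rfl | rfl
        · exact mem_span_triple.mpr ⟨X 10 * X 0, X 10 * X 2, X 4, by
            simp only [n1, n2, n3, d1, d2, d3]; ring⟩
        · exact mem_span_triple.mpr ⟨X 2 * X 8 * X 10 + X 4 * X 9,
            -(X 7 * X 10 * X 2), -(X 7 * X 4), by
            simp only [n1, n2, n3, d1, d2, d3]; ring⟩
        · exact mem_span_triple.mpr ⟨-(X 8 * X 10 * X 0),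
            X 0 * X 7 * X 10 + X 4 * X 9, -(X 8 * X 4), by
            simp only [n1, n2, n3, d1, d2, d3]; ring⟩
        · exact mem_span_triple.mpr ⟨-(X 9 * X 0), -(X 9 * X 2),
            X 0 * X 7 + X 2 * X 8, by
            simp only [n1, n2, n3, d1, d2, d3]; ring⟩
      · -- g = g2
        apply colon_helper
        intro d hd
        simp only [Set.mem_insert_iff, Set.mem_singleton_iff] at hd
        rcases hd with rfl | rfl | rfl | rfl
        · exact mem_span_triple.mpr ⟨X 10 * X 1, X 10 * X 3, X 5, by
            simp only [n1, n2, n3, d1, d2, d3]; ring⟩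
        · exact mem_span_triple.mpr ⟨X 3 * X 8 * X 10 + X 5 * X 9,
            -(X 7 * X 10 * X 3), -(X 7 * X 5), by
            simp only [n1, n2, n3, d1, d2, d3]; ring⟩
        · exact mem_span_triple.mpr ⟨-(X 8 * X 10 * X 1),
            X 1 * X 7 * X 10 + X 5 * X 9, -(X 8 * X 5), by
            simp only [n1, n2, n3, d1, d2, d3]; ring⟩
        · exact mem_span_triple.mpr ⟨-(X 9 * X 1), -(X 9 * X 3),
            X 1 * X 7 + X 3 * X 8, by
            simp only [n1, n2, n3, d1, d2, d3]; ring⟩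

end
end

section
/- Psi is an isomorphism of R0-algebras, and Psi maps the ideal (n1, n2, n3, L11*A1*B + L21*A2*B + L31*A3, L12*A1*B + L22*A2*B + L32*A3) of R onto the ideal (UP1, UP2, z2*D1 - w1*pi1, z2*D2 - w1*pi2, z2*D3 - w1*pi3) of R0[B] generated by the entries of Brown's matrix b1. -/
open MvPolynomial

noncomputable section

/- The polynomial ring `R = R0[L11, L12, L21, L22, L31, L32, d0, A1, A2, A3, B]`,
with the eleven indeterminates indexed as
`0 ↦ L11, 1 ↦ L12, 2 ↦ L21, 3 ↦ L22, 4 ↦ L31, 5 ↦ L32, 6 ↦ d0, 7 ↦ A1, 8 ↦ A2,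
9 ↦ A3, 10 ↦ B`,
and the polynomial ring `R0[B] = R0[u11, u12, u13, u21, u22, u23, pi1, pi2, pi3, w1, z2]`,
with the eleven indeterminates indexed as
`0 ↦ u11, 1 ↦ u12, 2 ↦ u13, 3 ↦ u21, 4 ↦ u22, 5 ↦ u23, 6 ↦ pi1, 7 ↦ pi2, 8 ↦ pi3,
9 ↦ w1, 10 ↦ z2`. -/

variable (R0 : Type*) [CommRing R0]

/-- `UP1 = u11*pi1 + u12*pi2 + u13*pi3`. -/
def UP1 : MvPolynomial (Fin 11) R0 := X 0 * X 6 + X 1 * X 7 + X 2 * X 8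

/-- `UP2 = u21*pi1 + u22*pi2 + u23*pi3`. -/
def UP2 : MvPolynomial (Fin 11) R0 := X 3 * X 6 + X 4 * X 7 + X 5 * X 8

/-- `D1 = u12*u23 - u13*u22`. -/
def D1 : MvPolynomial (Fin 11) R0 := X 1 * X 5 - X 2 * X 4

/-- `D2 = -(u11*u23 - u13*u21)`. -/
def D2 : MvPolynomial (Fin 11) R0 := -(X 0 * X 5 - X 2 * X 3)

/-- `D3 = u11*u22 - u12*u21`. -/
def D3 : MvPolynomial (Fin 11) R0 := X 0 * X 4 - X 1 * X 3

/-- The `R0`-algebra homomorphism `Ψ : R → R0[B]`: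
`L11 ↦ u11`, `L12 ↦ u12`, `L21 ↦ u21`, `L22 ↦ u22`, `L31 ↦ pi2`, `L32 ↦ -pi1`,
`d0 ↦ -pi3`, `A1 ↦ u23`, `A2 ↦ -u13`, `A3 ↦ w1`, `B ↦ z2`. -/
def Psi : MvPolynomial (Fin 11) R0 →ₐ[R0] MvPolynomial (Fin 11) R0 :=
  aeval ![X 0, X 1, X 3, X 4, X 7, -X 6, -X 8, X 5, -X 2, X 9, X 10]

def Phi : MvPolynomial (Fin 11) R0 →ₐ[R0] MvPolynomial (Fin 11) R0 :=
  aeval ![X 0, X 1, -X 8, X 2, X 3, X 7, -X 5, X 4, -X 6, X 9, X 10]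

/-- Example 6.1 (continued): `Ψ` is an isomorphism of `R0`-algebras carrying the ideal
`(n1, n2, n3, L11*A1*B + L21*A2*B + L31*A3, L12*A1*B + L22*A2*B + L32*A3)` onto the
ideal generated by the entries of Brown's matrix `b1`. -/
theorem Psi_bijective_and_maps_linked_ideal [IsDomain R0] [IsNoetherianRing R0] :
    Function.Bijective (Psi R0) ∧
    Ideal.map (Psi R0)
        (Ideal.span {n1 R0, n2 R0, n3 R0,
          X 0 * X 7 * X 10 + X 2 * X 8 * X 10 + X 4 * X 9,
          X 1 * X 7 * X 10 + X 3 * X 8 * X 10 + X 5 * X 9}) =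
      Ideal.span {UP1 R0, UP2 R0,
        X 10 * D1 R0 - X 9 * X 6,
        X 10 * D2 R0 - X 9 * X 7,
        X 10 * D3 R0 - X 9 * X 8} := by
  have hP0 : Psi R0 (X 0) = (X 0 : MvPolynomial (Fin 11) R0) := aeval_X _ 0
  have hP1 : Psi R0 (X 1) = (X 1 : MvPolynomial (Fin 11) R0) := aeval_X _ 1
  have hP2 : Psi R0 (X 2) = (X 3 : MvPolynomial (Fin 11) R0) := aeval_X _ 2
  have hP3 : Psi R0 (X 3) = (X 4 : MvPolynomial (Fin 11) R0) := aeval_X _ 3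
  have hP4 : Psi R0 (X 4) = (X 7 : MvPolynomial (Fin 11) R0) := aeval_X _ 4
  have hP5 : Psi R0 (X 5) = (-X 6 : MvPolynomial (Fin 11) R0) := aeval_X _ 5
  have hP6 : Psi R0 (X 6) = (-X 8 : MvPolynomial (Fin 11) R0) := aeval_X _ 6
  have hP7 : Psi R0 (X 7) = (X 5 : MvPolynomial (Fin 11) R0) := aeval_X _ 7
  have hP8 : Psi R0 (X 8) = (-X 2 : MvPolynomial (Fin 11) R0) := aeval_X _ 8
  have hP9 : Psi R0 (X 9) = (X 9 : MvPolynomial (Fin 11) R0) := aeval_X _ 9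
  have hP10 : Psi R0 (X 10) = (X 10 : MvPolynomial (Fin 11) R0) := aeval_X _ 10
  have hQ0 : Phi R0 (X 0) = (X 0 : MvPolynomial (Fin 11) R0) := aeval_X _ 0
  have hQ1 : Phi R0 (X 1) = (X 1 : MvPolynomial (Fin 11) R0) := aeval_X _ 1
  have hQ2 : Phi R0 (X 2) = (-X 8 : MvPolynomial (Fin 11) R0) := aeval_X _ 2
  have hQ3 : Phi R0 (X 3) = (X 2 : MvPolynomial (Fin 11) R0) := aeval_X _ 3
  have hQ4 : Phi R0 (X 4) = (X 3 : MvPolynomial (Fin 11) R0) := aeval_X _ 4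
  have hQ5 : Phi R0 (X 5) = (X 7 : MvPolynomial (Fin 11) R0) := aeval_X _ 5
  have hQ6 : Phi R0 (X 6) = (-X 5 : MvPolynomial (Fin 11) R0) := aeval_X _ 6
  have hQ7 : Phi R0 (X 7) = (X 4 : MvPolynomial (Fin 11) R0) := aeval_X _ 7
  have hQ8 : Phi R0 (X 8) = (-X 6 : MvPolynomial (Fin 11) R0) := aeval_X _ 8
  have hQ9 : Phi R0 (X 9) = (X 9 : MvPolynomial (Fin 11) R0) := aeval_X _ 9
  have hQ10 : Phi R0 (X 10) = (X 10 : MvPolynomial (Fin 11) R0) := aeval_X _ 10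
  have hC0 : Phi R0 (Psi R0 (X 0)) = (X 0 : MvPolynomial (Fin 11) R0) := by rw [hP0, hQ0]
  have hC1 : Phi R0 (Psi R0 (X 1)) = (X 1 : MvPolynomial (Fin 11) R0) := by rw [hP1, hQ1]
  have hC2 : Phi R0 (Psi R0 (X 2)) = (X 2 : MvPolynomial (Fin 11) R0) := by rw [hP2, hQ3]
  have hC3 : Phi R0 (Psi R0 (X 3)) = (X 3 : MvPolynomial (Fin 11) R0) := by rw [hP3, hQ4]
  have hC4 : Phi R0 (Psi R0 (X 4)) = (X 4 : MvPolynomial (Fin 11) R0) := by rw [hP4, hQ7]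
  have hC5 : Phi R0 (Psi R0 (X 5)) = (X 5 : MvPolynomial (Fin 11) R0) := by rw [hP5, map_neg, hQ6, neg_neg]
  have hC6 : Phi R0 (Psi R0 (X 6)) = (X 6 : MvPolynomial (Fin 11) R0) := by rw [hP6, map_neg, hQ8, neg_neg]
  have hC7 : Phi R0 (Psi R0 (X 7)) = (X 7 : MvPolynomial (Fin 11) R0) := by rw [hP7, hQ5]
  have hC8 : Phi R0 (Psi R0 (X 8)) = (X 8 : MvPolynomial (Fin 11) R0) := by rw [hP8, map_neg, hQ2, neg_neg]
  have hC9 : Phi R0 (Psi R0 (X 9)) = (X 9 : MvPolynomial (Fin 11) R0) := by rw [hP9, hQ9]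
  have hC10 : Phi R0 (Psi R0 (X 10)) = (X 10 : MvPolynomial (Fin 11) R0) := by rw [hP10, hQ10]
  have hD0 : Psi R0 (Phi R0 (X 0)) = (X 0 : MvPolynomial (Fin 11) R0) := by rw [hQ0, hP0]
  have hD1 : Psi R0 (Phi R0 (X 1)) = (X 1 : MvPolynomial (Fin 11) R0) := by rw [hQ1, hP1]
  have hD2 : Psi R0 (Phi R0 (X 2)) = (X 2 : MvPolynomial (Fin 11) R0) := by rw [hQ2, map_neg, hP8, neg_neg]
  have hD3 : Psi R0 (Phi R0 (X 3)) = (X 3 : MvPolynomial (Fin 11) R0) := by rw [hQ3, hP2]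
  have hD4 : Psi R0 (Phi R0 (X 4)) = (X 4 : MvPolynomial (Fin 11) R0) := by rw [hQ4, hP3]
  have hD5 : Psi R0 (Phi R0 (X 5)) = (X 5 : MvPolynomial (Fin 11) R0) := by rw [hQ5, hP7]
  have hD6 : Psi R0 (Phi R0 (X 6)) = (X 6 : MvPolynomial (Fin 11) R0) := by rw [hQ6, map_neg, hP5, neg_neg]
  have hD7 : Psi R0 (Phi R0 (X 7)) = (X 7 : MvPolynomial (Fin 11) R0) := by rw [hQ7, hP4]
  have hD8 : Psi R0 (Phi R0 (X 8)) = (X 8 : MvPolynomial (Fin 11) R0) := by rw [hQ8, map_neg, hP6, neg_neg]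
  have hD9 : Psi R0 (Phi R0 (X 9)) = (X 9 : MvPolynomial (Fin 11) R0) := by rw [hQ9, hP9]
  have hD10 : Psi R0 (Phi R0 (X 10)) = (X 10 : MvPolynomial (Fin 11) R0) := by rw [hQ10, hP10]
  have hΦΨ : (Phi R0).comp (Psi R0) = AlgHom.id R0 _ := by
    apply MvPolynomial.algHom_ext
    intro i
    fin_cases i
    · exact hC0
    · exact hC1
    · exact hC2
    · exact hC3
    · exact hC4
    · exact hC5
    · exact hC6
    · exact hC7
    · exact hC8
    · exact hC9
    · exact hC10
  have hΨΦ : (Psi R0).comp (Phi R0) = AlgHom.id R0 _ := by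
    apply MvPolynomial.algHom_ext
    intro i
    fin_cases i
    · exact hD0
    · exact hD1
    · exact hD2
    · exact hD3
    · exact hD4
    · exact hD5
    · exact hD6
    · exact hD7
    · exact hD8
    · exact hD9
    · exact hD10
  refine ⟨Function.bijective_iff_has_inverse.2 ⟨Phi R0,
      fun p => AlgHom.congr_fun hΦΨ p, fun p => AlgHom.congr_fun hΨΦ p⟩, ?_⟩
  have e1 : Psi R0 (n1 R0) = -(UP2 R0) := by
    simp only [n1, d1, UP2, map_add, map_sub, map_mul, map_neg, hP0, hP1, hP2, hP3, hP4, hP5, hP6, hP7, hP8, hP9, hP10]; ring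
  have e2 : Psi R0 (n2 R0) = UP1 R0 := by
    simp only [n2, d2, UP1, map_add, map_sub, map_mul, map_neg, hP0, hP1, hP2, hP3, hP4, hP5, hP6, hP7, hP8, hP9, hP10]; ring
  have e3 : Psi R0 (n3 R0) = X 10 * D3 R0 - X 9 * X 8 := by
    simp only [n3, d3, D3, map_add, map_sub, map_mul, map_neg, hP0, hP1, hP2, hP3, hP4, hP5, hP6, hP7, hP8, hP9, hP10]; ring
  have e4 : Psi R0 (X 0 * X 7 * X 10 + X 2 * X 8 * X 10 + X 4 * X 9) =
      -(X 10 * D2 R0 - X 9 * X 7) := by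
    simp only [D2, map_add, map_sub, map_mul, map_neg, hP0, hP1, hP2, hP3, hP4, hP5, hP6, hP7, hP8, hP9, hP10]; ring
  have e5 : Psi R0 (X 1 * X 7 * X 10 + X 3 * X 8 * X 10 + X 5 * X 9) =
      X 10 * D1 R0 - X 9 * X 6 := by
    simp only [D1, map_add, map_sub, map_mul, map_neg, hP0, hP1, hP2, hP3, hP4, hP5, hP6, hP7, hP8, hP9, hP10]; ring
  rw [Ideal.map_span]
  rw [show ((Psi R0) '' {n1 R0, n2 R0, n3 R0,
        X 0 * X 7 * X 10 + X 2 * X 8 * X 10 + X 4 * X 9,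
        X 1 * X 7 * X 10 + X 3 * X 8 * X 10 + X 5 * X 9} : Set _) =
      {-(UP2 R0), UP1 R0, X 10 * D3 R0 - X 9 * X 8,
        -(X 10 * D2 R0 - X 9 * X 7), X 10 * D1 R0 - X 9 * X 6} by
    simp only [Set.image_insert_eq, Set.image_singleton, e1, e2, e3, e4, e5]]
  set t1 : MvPolynomial (Fin 11) R0 := X 10 * D1 R0 - X 9 * X 6 with ht1
  set t2 : MvPolynomial (Fin 11) R0 := X 10 * D2 R0 - X 9 * X 7 with ht2
  set t3 : MvPolynomial (Fin 11) R0 := X 10 * D3 R0 - X 9 * X 8 with ht3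
  have m1 : ∀ (a b c d e : MvPolynomial (Fin 11) R0),
      a ∈ ({a, b, c, d, e} : Set _) := fun a b c d e => Set.mem_insert _ _
  have m2 : ∀ (a b c d e : MvPolynomial (Fin 11) R0), b ∈ ({a, b, c, d, e} : Set _) :=
    fun a b c d e => Set.mem_insert_of_mem _ (Set.mem_insert _ _)
  have m3 : ∀ (a b c d e : MvPolynomial (Fin 11) R0), c ∈ ({a, b, c, d, e} : Set _) :=
    fun a b c d e => Set.mem_insert_of_mem _ (Set.mem_insert_of_mem _ (Set.mem_insert _ _))
  have m4 : ∀ (a b c d e : MvPolynomial (Fin 11) R0), d ∈ ({a, b, c, d, e} : Set _) :=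
    fun a b c d e => Set.mem_insert_of_mem _ (Set.mem_insert_of_mem _
      (Set.mem_insert_of_mem _ (Set.mem_insert _ _)))
  have m5 : ∀ (a b c d e : MvPolynomial (Fin 11) R0), e ∈ ({a, b, c, d, e} : Set _) :=
    fun a b c d e => Set.mem_insert_of_mem _ (Set.mem_insert_of_mem _
      (Set.mem_insert_of_mem _ (Set.mem_insert_of_mem _ rfl)))
  apply le_antisymm
  · rw [Ideal.span_le]
    intro x hx
    simp only [Set.mem_insert_iff, Set.mem_singleton_iff] at hx
    rcases hx with rfl | rfl | rfl | rfl | rfl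
    · exact neg_mem (Ideal.subset_span (m2 (UP1 R0) (UP2 R0) t1 t2 t3))
    · exact Ideal.subset_span (m1 (UP1 R0) (UP2 R0) t1 t2 t3)
    · exact Ideal.subset_span (m5 (UP1 R0) (UP2 R0) t1 t2 t3)
    · exact neg_mem (Ideal.subset_span (m4 (UP1 R0) (UP2 R0) t1 t2 t3))
    · exact Ideal.subset_span (m3 (UP1 R0) (UP2 R0) t1 t2 t3)
  · rw [Ideal.span_le]
    intro x hx
    simp only [Set.mem_insert_iff, Set.mem_singleton_iff] at hx
    rcases hx with rfl | rfl | rfl | rfl | rfl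
    · exact Ideal.subset_span (m2 (-(UP2 R0)) (UP1 R0) t3 (-t2) t1)
    · have := neg_mem (Ideal.subset_span (m1 (-(UP2 R0)) (UP1 R0) t3 (-t2) t1))
      simpa using this
    · exact Ideal.subset_span (m5 (-(UP2 R0)) (UP1 R0) t3 (-t2) t1)
    · have := neg_mem (Ideal.subset_span (m4 (-(UP2 R0)) (UP1 R0) t3 (-t2) t1))
      simpa using this
    · exact Ideal.subset_span (m3 (-(UP2 R0)) (UP1 R0) t3 (-t2) t1)

end
end
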